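/- arXiv:2407.20378 — 6 statements merged into one kernel-verified Lean document; each statement's English description precedes it below -/
import Mathlib

section
/- Let K be a field of characteristic different from 2 and let f ∈ K[x] be a polynomial in one variable. If f is a sum of N squares in the rational function field K(x), then f is a sum of N squares of polynomials in K[x]. -/
open Polynomial

lemma key_identity {R : Type*} [CommRing R] {N : ℕ} (f q : R) (p h : Fin N → R)
    (hfq : f * q ^ 2 = ∑ i, p i ^ 2) :
    f * (f * q + q * (∑ i, h i ^ 2) - 2 * (∑ i, p i * h i)) ^ 2 =
    ∑ i, ((f * q + q * (∑ i, h i ^ 2) - 2 * (∑ i, p i * h i)) * h i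
          + ((∑ i, h i ^ 2) - f) * (p i - q * h i)) ^ 2 := by
  set Qh := ∑ i, h i ^ 2 with hQh
  set s := ∑ i, p i * h i with hs
  set A := f * q + q * Qh - 2 * s with hA
  set B := Qh - f with hB
  have e : ∀ i ∈ Finset.univ, (A * h i + B * (p i - q * h i)) ^ 2
      = (A ^ 2 + B ^ 2 * q ^ 2 - 2 * A * B * q) * h i ^ 2 + B ^ 2 * p i ^ 2
        + (2 * A * B - 2 * B ^ 2 * q) * (p i * h i) := fun i _ => by ring
  rw [Finset.sum_congr rfl e, Finset.sum_add_distrib, Finset.sum_add_distrib,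
    ← Finset.mul_sum, ← Finset.mul_sum, ← Finset.mul_sum, ← hQh, ← hs, ← hfq, hA, hB]
  ring

lemma isotropic_case {K : Type*} [Field K] (h2 : (2 : K) ≠ 0) {N : ℕ} (c : Fin N → K)
    (j : Fin N) (hcj : c j ≠ 0) (hc : ∑ i, c i ^ 2 = 0) (f : Polynomial K) :
    ∃ p : Fin N → Polynomial K, f = ∑ i, p i ^ 2 := by
  set a : Fin N → K := fun i => c i * (2 * c j)⁻¹ with ha
  set d : Fin N → K := fun i => if i = j then 1 else 0 with hd
  have h2cj : (2 * c j) ≠ 0 := mul_ne_zero h2 hcj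
  have haj : a j = (2:K)⁻¹ := by
    show c j * (2 * c j)⁻¹ = (2:K)⁻¹; rw [mul_inv, mul_left_comm, mul_inv_cancel₀ hcj, mul_one]
  have ha2 : ∑ i, a i ^ 2 = 0 := by
    have : ∀ i ∈ Finset.univ, a i ^ 2 = c i ^ 2 * ((2 * c j)⁻¹) ^ 2 := fun i _ => by
      simp [ha, mul_pow]
    rw [Finset.sum_congr rfl this, ← Finset.sum_mul, hc, zero_mul]
  have had : ∑ i, a i * d i = (2:K)⁻¹ := by
    have : ∀ i ∈ Finset.univ, a i * d i = if i = j then a i else 0 := fun i _ => by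
      simp only [hd]; split <;> simp
    rw [Finset.sum_congr rfl this, Finset.sum_ite_eq' Finset.univ j a]
    simp [haj]
  have hdd : ∑ i, d i ^ 2 = 1 := by
    have : ∀ i ∈ Finset.univ, d i ^ 2 = if i = j then 1 else 0 := fun i _ => by
      simp only [hd]; split <;> simp
    rw [Finset.sum_congr rfl this, Finset.sum_ite_eq' Finset.univ j (fun _ => (1:K))]
    simp
  refine ⟨fun i => C (a i) * f + C (d i - a i), ?_⟩
  have expand : ∑ i, (C (a i) * f + C (d i - a i)) ^ 2
      = C (∑ i, a i ^ 2) * f ^ 2 + C (∑ i, (2 * a i * (d i - a i))) * f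
        + C (∑ i, (d i - a i) ^ 2) := by
    rw [map_sum, map_sum, map_sum, Finset.sum_mul, Finset.sum_mul,
      ← Finset.sum_add_distrib, ← Finset.sum_add_distrib]
    refine Finset.sum_congr rfl fun i _ => ?_
    simp only [map_mul, map_sub, map_pow, map_ofNat]
    ring
  have hmid : ∑ i, (2 * a i * (d i - a i)) = 1 := by
    have : ∀ i ∈ Finset.univ, 2 * a i * (d i - a i)
        = 2 * (a i * d i) - 2 * a i ^ 2 := fun i _ => by ring
    rw [Finset.sum_congr rfl this, Finset.sum_sub_distrib, ← Finset.mul_sum,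
      ← Finset.mul_sum, had, ha2]
    field_simp
    norm_num
  have hlast : ∑ i, (d i - a i) ^ 2 = 0 := by
    have : ∀ i ∈ Finset.univ, (d i - a i) ^ 2
        = d i ^ 2 - 2 * (a i * d i) + a i ^ 2 := fun i _ => by ring
    rw [Finset.sum_congr rfl this]
    rw [Finset.sum_add_distrib, Finset.sum_sub_distrib, ← Finset.mul_sum, had, ha2, hdd]
    field_simp
    norm_num
  rw [expand, ha2, hmid, hlast]
  simp

lemma descent {K : Type*} [Field K] (h2 : (2 : K) ≠ 0) {N : ℕ} (f : Polynomial K) :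
    ∀ n : ℕ, ∀ q : Polynomial K, q.natDegree ≤ n → q ≠ 0 →
      ∀ p : Fin N → Polynomial K, f * q ^ 2 = ∑ i, p i ^ 2 →
      ∃ p' : Fin N → Polynomial K, f = ∑ i, p' i ^ 2 := by
  classical
  intro n
  induction n with
  | zero =>
    intro q hqn hq0 p hfq
    obtain ⟨c, rfl⟩ := Polynomial.natDegree_eq_zero.mp (Nat.le_zero.mp hqn)
    have hc : c ≠ 0 := fun h => hq0 (by simp [h])
    refine ⟨fun i => C c⁻¹ * p i, ?_⟩
    have : ∑ i, (C c⁻¹ * p i) ^ 2 = (C c⁻¹) ^ 2 * ∑ i, p i ^ 2 := by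
      rw [Finset.mul_sum]; exact Finset.sum_congr rfl fun i _ => by ring
    rw [this, ← hfq, ← mul_assoc, mul_comm ((C c⁻¹)^2) f, mul_assoc, ← mul_pow,
      ← C_mul, inv_mul_cancel₀ hc, C_1, one_pow, mul_one]
  | succ n ih =>
    intro q hqn hq0 p hfq
    by_cases hle : q.natDegree ≤ n
    · exact ih q hle hq0 p hfq
    have hdeg : q.natDegree = n + 1 := le_antisymm hqn (not_le.1 hle)
    -- normalize to monic
    set Q : Polynomial K := q * C q.leadingCoeff⁻¹ with hQdef
    have hQm : Q.Monic := monic_mul_leadingCoeff_inv hq0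
    have hQ0 : Q ≠ 0 := hQm.ne_zero
    have hQdeg : Q.natDegree = n + 1 := by
      have := degree_mul_leadingCoeff_inv q hq0
      rw [← hdeg]
      exact natDegree_eq_of_degree_eq this ▸ rfl
    set P : Fin N → Polynomial K := fun i => p i * C q.leadingCoeff⁻¹ with hPdef
    have hfQ : f * Q ^ 2 = ∑ i, P i ^ 2 := by
      have : ∑ i, P i ^ 2 = (∑ i, p i ^ 2) * (C q.leadingCoeff⁻¹) ^ 2 := by
        rw [Finset.sum_mul]; exact Finset.sum_congr rfl fun i _ => by simp [hPdef]; ring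
      rw [this, ← hfq, hQdef]; ring
    set h : Fin N → Polynomial K := fun i => P i /ₘ Q with hhdef
    set r : Fin N → Polynomial K := fun i => P i %ₘ Q with hrdef
    have hPr : ∀ i, r i = P i - Q * h i := fun i => by
      rw [hrdef, hhdef, eq_sub_iff_add_eq, modByMonic_add_div (P i) Q]
    have hrn : ∀ i, (r i).natDegree ≤ n := by
      intro i
      by_cases h0 : r i = 0
      · simp [h0]
      · have := natDegree_lt_natDegree h0 (degree_modByMonic_lt (P i) hQm)
        omega
    set G : Polynomial K := ∑ i, r i ^ 2 with hGdef
    have hGQ : G = Q * (f * Q + Q * (∑ i, h i ^ 2) - 2 * (∑ i, P i * h i)) := by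
      have e : ∀ i ∈ Finset.univ, r i ^ 2
          = P i ^ 2 + Q ^ 2 * h i ^ 2 - 2 * Q * (P i * h i) := fun i _ => by
        rw [hPr i]; ring
      rw [hGdef, Finset.sum_congr rfl e]
      rw [Finset.sum_sub_distrib, Finset.sum_add_distrib, ← Finset.mul_sum,
        ← Finset.mul_sum, ← hfQ]
      ring
    by_cases hG : G = 0
    · by_cases hr0 : ∀ i, r i = 0
      · refine ⟨h, ?_⟩
        have : ∀ i ∈ Finset.univ, P i ^ 2 = Q ^ 2 * h i ^ 2 := fun i _ => by
          have := hPr i; rw [hr0 i] at this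
          have hP : P i = Q * h i := by linear_combination -this
          rw [hP]; ring
        rw [Finset.sum_congr rfl this, ← Finset.mul_sum] at hfQ
        have := mul_left_cancel₀ (pow_ne_zero 2 hQ0) (by rw [← hfQ]; ring : Q ^ 2 * f = Q ^ 2 * ∑ i, h i ^ 2)
        exact this
      · push_neg at hr0
        obtain ⟨i0, hi0⟩ := hr0
        have hS : (Finset.univ.filter (fun i => r i ≠ 0)).Nonempty :=
          ⟨i0, Finset.mem_filter.mpr ⟨Finset.mem_univ _, hi0⟩⟩
        obtain ⟨j, hjS, hjmax⟩ := Finset.exists_max_image _ (fun i => (r i).natDegree) hS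
        have hj0 : r j ≠ 0 := (Finset.mem_filter.mp hjS).2
        set d := (r j).natDegree with hd
        have hcd : ∀ i, (r i).natDegree ≤ d := by
          intro i
          by_cases h0 : r i = 0
          · simp [h0]
          · exact hjmax i (Finset.mem_filter.mpr ⟨Finset.mem_univ _, h0⟩)
        have hcj : (r j).coeff d ≠ 0 := by
          rw [hd, ← leadingCoeff]; exact leadingCoeff_ne_zero.mpr hj0
        have hsum : ∑ i, ((r i).coeff d) ^ 2 = 0 := by
          have e : ∀ i ∈ Finset.univ, ((r i).coeff d) ^ 2 = (r i ^ 2).coeff (d + d) :=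
            fun i _ => by
              symm
              rw [pow_two, coeff_mul_add_eq_of_natDegree_le (hcd i) (hcd i), ← pow_two]
          rw [Finset.sum_congr rfl e, ← finset_sum_coeff, ← hGdef, hG, coeff_zero]
        exact isotropic_case h2 (fun i => (r i).coeff d) j hcj hsum f
    · set q' : Polynomial K := f * Q + Q * (∑ i, h i ^ 2) - 2 * (∑ i, P i * h i) with hq'def
      have hq'0 : q' ≠ 0 := by
        intro h0
        exact hG (by rw [hGQ, h0, mul_zero])
      have hGn : G.natDegree ≤ 2 * n := by
        refine natDegree_sum_le_of_forall_le _ _ fun i _ => ?_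
        rw [natDegree_pow]
        have := hrn i
        omega
      have hq'n : q'.natDegree ≤ n := by
        have := natDegree_mul hQ0 hq'0
        rw [← hGQ, hQdeg] at this
        omega
      exact ih q' hq'n hq'0
        (fun i => q' * h i + ((∑ i, h i ^ 2) - f) * (P i - Q * h i))
        (key_identity f Q P h hfQ)

/-- Cassels, sums of squares case: Let `K` be a field of characteristic
different from 2 and `f ∈ K[x]`. If `f` is a sum of `N` squares in `K(x)`, then `f`
is a sum of `N` squares of polynomials in `K[x]`. -/
theorem cassels_sum_of_squares (K : Type*) [Field K] (hchar : ringChar K ≠ 2)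
    (f : Polynomial K) (N : ℕ)
    (h : ∃ r : Fin N → RatFunc K,
      algebraMap (Polynomial K) (RatFunc K) f = ∑ i, r i ^ 2) :
    ∃ p : Fin N → Polynomial K, f = ∑ i, p i ^ 2 := by
  obtain ⟨r, hr⟩ := h
  obtain ⟨b, hb⟩ := IsLocalization.exist_integer_multiples
    (nonZeroDivisors (Polynomial K)) Finset.univ r
  have hex : ∀ i : Fin N, ∃ y : Polynomial K,
      algebraMap (Polynomial K) (RatFunc K) y = (b : Polynomial K) • r i :=
    fun i => hb i (Finset.mem_univ i)
  choose p hp using hex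
  set q : Polynomial K := (b : Polynomial K) with hqdef
  have hq0 : q ≠ 0 := nonZeroDivisors.coe_ne_zero b
  have key : algebraMap (Polynomial K) (RatFunc K) (f * q ^ 2)
      = algebraMap (Polynomial K) (RatFunc K) (∑ i, p i ^ 2) := by
    rw [map_mul, map_pow, map_sum, hr, Finset.sum_mul]
    refine Finset.sum_congr rfl fun i _ => ?_
    rw [map_pow, hp i, Algebra.smul_def]
    ring
  have hfq : f * q ^ 2 = ∑ i, p i ^ 2 :=
    IsFractionRing.injective (Polynomial K) (RatFunc K) key
  have h2 : (2 : K) ≠ 0 := Ring.two_ne_zero hchar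
  exact descent h2 f q.natDegree q le_rfl hq0 p hfq
end

section
/- Let K be a formally real field and let f ∈ K[x,y] be a polynomial in two variables. If f is a sum of N squares in the rational function field K(x,y), then there exist a polynomial g ∈ K[x] in the single variable x with g(a) ≠ 0 for every a ∈ K, and polynomials f₁, …, f_N ∈ K[x,y], such that g²·f = f₁² + ⋯ + f_N². -/
open Polynomial

section FR
variable {F : Type*} [Field F]

lemma isSumSq_natCast {R : Type*} [Semiring R] (n : ℕ) : IsSumSq (n : R) := by
  induction n with
  | zero => simpa using (IsSumSq.zero : IsSumSq (0 : R))
  | succ n ih =>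
    have : ((n+1 : ℕ) : R) = 1 * 1 + (n : R) := by
      rw [Nat.cast_add, Nat.cast_one, one_mul, add_comm]
    rw [this]; exact IsSumSq.sq_add 1 ih

lemma charZero_of_not_isSumSq (hF : ¬ IsSumSq (-1 : F)) : CharZero F := by
  obtain ⟨p, hp⟩ := CharP.exists F
  rcases CharP.char_is_prime_or_zero F p with hprime | rfl
  · exfalso
    apply hF
    have h0 : ((p : ℕ) : F) = 0 := CharP.cast_eq_zero F p
    have h1 : ((p - 1 : ℕ) : F) = -1 := by
      have : (1 : ℕ) ≤ p := hprime.one_lt.le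
      push_cast [this]
      rw [h0]; ring
    rw [← h1]; exact isSumSq_natCast _
  · exact CharP.charP_to_charZero F

lemma IsSumSq.mul_mul_self {R : Type*} [CommRing R] {S : R} (hS : IsSumSq S) (c : R) :
    IsSumSq (S * (c * c)) := by
  induction hS with
  | zero => rw [zero_mul]; exact IsSumSq.zero
  | @sq_add a s hs ih =>
    have : (a * a + s) * (c * c) = (a * c) * (a * c) + s * (c * c) := by ring
    rw [this]; exact IsSumSq.sq_add _ ih

lemma eq_zero_of_sq_add_isSumSq (hF : ¬ IsSumSq (-1 : F)) {a S : F} (hS : IsSumSq S)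
    (h : a ^ 2 + S = 0) : a = 0 := by
  by_contra ha
  apply hF
  have : (-1 : F) = S * (a⁻¹ * a⁻¹) := by
    field_simp
    linear_combination -h
  rw [this]; exact hS.mul_mul_self _

lemma forall_eq_zero_of_sum_sq_eq_zero (hF : ¬ IsSumSq (-1 : F)) {n : ℕ} {s : Fin n → F}
    (h : ∑ i, s i ^ 2 = 0) (j : Fin n) : s j = 0 := by
  have hsplit : s j ^ 2 + ∑ i ∈ Finset.univ.erase j, s i ^ 2 = 0 := by
    rw [Finset.add_sum_erase _ (fun i => s i ^ 2) (Finset.mem_univ j)]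
    exact h
  refine eq_zero_of_sq_add_isSumSq hF ?_ hsplit
  have := IsSumSq.sum_mul_self (Finset.univ.erase j) s
  simpa [sq] using this

lemma forall_eq_zero_of_sum_sq_poly_eq_zero (hF : ¬ IsSumSq (-1 : F)) {n : ℕ}
    {P : Fin n → F[X]} (h : ∑ i, P i ^ 2 = 0) (j : Fin n) : P j = 0 := by
  haveI : CharZero F := charZero_of_not_isSumSq hF
  apply Polynomial.funext
  intro r
  simp only [eval_zero]
  have hr : ∑ i, (P i).eval r ^ 2 = 0 := by
    have := congrArg (Polynomial.eval r) h
    simpa [Polynomial.eval_finset_sum] using this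
  exact forall_eq_zero_of_sum_sq_eq_zero hF hr j

lemma isSumSq_iff_exists_sum {R : Type*} [AddCommMonoid R] [Mul R] {x : R} (hx : IsSumSq x) :
    ∃ (n : ℕ) (s : Fin n → R), x = ∑ i, s i * s i := by
  induction hx with
  | zero => exact ⟨0, ![], by simp⟩
  | @sq_add a s hs ih =>
    obtain ⟨n, t, ht⟩ := ih
    exact ⟨n + 1, Fin.cons a t, by simp [Fin.sum_univ_succ, ht]⟩

end FR
section CasselsSec
variable {F : Type*} [Field F]

lemma not_isSumSq_neg_one_fraction (hF : ¬ IsSumSq (-1 : F))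
    (L : Type*) [Field L] [Algebra F[X] L] [IsFractionRing F[X] L] :
    ¬ IsSumSq (-1 : L) := by
  intro hs
  obtain ⟨n, s, hsum⟩ := isSumSq_iff_exists_sum hs
  obtain ⟨b, hb⟩ := IsLocalization.exist_integer_multiples_of_finite
      (nonZeroDivisors F[X]) s
  choose m hm using fun i => hb i
  have key0 : algebraMap F[X] L ((b : F[X]) ^ 2 + ∑ i, m i ^ 2) = 0 := by
    have h1 : (∑ i, algebraMap F[X] L (m i) ^ 2)
        = ∑ i, (algebraMap F[X] L (b : F[X]) * s i) ^ 2 :=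
      Finset.sum_congr rfl fun i _ => by rw [hm i, Algebra.smul_def]
    rw [map_add, map_pow, map_sum]
    simp only [map_pow]
    rw [h1]
    have : ∑ i, (algebraMap F[X] L (b : F[X]) * s i) ^ 2
        = algebraMap F[X] L (b : F[X]) ^ 2 * ∑ i, s i * s i := by
      rw [Finset.mul_sum]
      exact Finset.sum_congr rfl fun i _ => by ring
    rw [this, ← hsum]
    ring
  have key : (b : F[X]) ^ 2 + ∑ i, m i ^ 2 = 0 := by
    apply IsFractionRing.injective F[X] L
    rw [key0, map_zero]
  have hz := forall_eq_zero_of_sum_sq_poly_eq_zero hF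
      (P := Fin.cons ((b : F[X])) m)
      (by rw [Fin.sum_univ_succ]; simpa using key) 0
  simp only [Fin.cons_zero] at hz
  exact nonZeroDivisors.coe_ne_zero b hz

theorem cassels (hF : ¬ IsSumSq (-1 : F)) (P : F[X]) {N : ℕ}
    (L : Type*) [Field L] [Algebra F[X] L] [IsFractionRing F[X] L]
    (h : ∃ r : Fin N → L, algebraMap F[X] L P = ∑ i, r i ^ 2) :
    ∃ q : Fin N → F[X], P = ∑ i, q i ^ 2 := by
  classical
  obtain ⟨r, hr⟩ := h
  have hQ : ∃ d, ∃ g₀ : F[X], ∃ g : Fin N → F[X], g₀.Monic ∧ g₀.natDegree = d ∧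
      P * g₀ ^ 2 = ∑ i, g i ^ 2 := by
    obtain ⟨b, hb⟩ := IsLocalization.exist_integer_multiples_of_finite
        (nonZeroDivisors F[X]) r
    choose n hn using fun i => hb i
    have hbne : (b : F[X]) ≠ 0 := nonZeroDivisors.coe_ne_zero b
    have E0 : P * (b : F[X]) ^ 2 = ∑ i, n i ^ 2 := by
      apply IsFractionRing.injective F[X] L
      calc algebraMap F[X] L (P * (b : F[X]) ^ 2)
          = (∑ i, r i ^ 2) * (algebraMap F[X] L (b : F[X])) ^ 2 := by
            rw [map_mul, map_pow, hr]
        _ = ∑ i, ((b : F[X]) • r i) ^ 2 := by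
            rw [Finset.sum_mul]
            exact Finset.sum_congr rfl fun i _ => by rw [Algebra.smul_def]; ring
        _ = ∑ i, algebraMap F[X] L (n i ^ 2) := by
            exact Finset.sum_congr rfl fun i _ => by rw [map_pow, hn i]
        _ = algebraMap F[X] L (∑ i, n i ^ 2) := (map_sum _ _ _).symm
    refine ⟨_, (b : F[X]) * C ((b : F[X]).leadingCoeff)⁻¹,
      fun i => n i * C ((b : F[X]).leadingCoeff)⁻¹,
      monic_mul_leadingCoeff_inv hbne, rfl, ?_⟩
    rw [mul_pow, ← mul_assoc, E0, Finset.sum_mul]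
    exact Finset.sum_congr rfl fun i _ => by ring
  set d := Nat.find hQ with hd
  obtain ⟨g₀, g, hmon, hdeg, heq⟩ := Nat.find_spec hQ
  rcases Nat.eq_zero_or_pos d with hd0 | hdpos
  · have hone : g₀ = 1 := hmon.natDegree_eq_zero.mp (by rw [hdeg, ← hd, hd0])
    refine ⟨g, ?_⟩
    rw [← heq, hone, one_pow, mul_one]
  · exfalso
    set q : Fin N → F[X] := fun i => g i /ₘ g₀ with hq
    set h' : Fin N → F[X] := fun i => g i %ₘ g₀ with hh
    have hgi : ∀ i, h' i = g i - g₀ * q i := fun i =>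
      eq_sub_of_add_eq (modByMonic_add_div (g i) g₀)
    have hg0ne : g₀ ≠ 0 := hmon.ne_zero
    have hdegh : ∀ i, (h' i).natDegree < d := by
      intro i
      by_cases h0 : h' i = 0
      · rw [h0]; simpa using hdpos
      · rw [hd, ← hdeg]
        exact natDegree_lt_natDegree h0 (degree_modByMonic_lt (g i) hmon)
    by_cases hS : ∑ i, h' i ^ 2 = 0
    · have hz : ∀ i, h' i = 0 := fun i => forall_eq_zero_of_sum_sq_poly_eq_zero hF hS i
      have hP : P = ∑ i, q i ^ 2 := by
        have h2 : P * g₀ ^ 2 = (∑ i, q i ^ 2) * g₀ ^ 2 := by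
          rw [heq, Finset.sum_mul]
          refine Finset.sum_congr rfl fun i _ => ?_
          have h3 := hgi i
          rw [hz i] at h3
          have hgq : g i = g₀ * q i := by linear_combination -h3
          rw [hgq]; ring
        exact mul_right_cancel₀ (pow_ne_zero 2 hg0ne) h2
      exact Nat.find_min hQ hdpos ⟨1, q, monic_one, natDegree_one,
        by rw [hP, one_pow, mul_one]⟩
    · set qw : F[X] := (∑ i, q i ^ 2) - P with hqw
      set bb : F[X] := (∑ i, g i * q i) - P * g₀ with hbb
      set v0 : F[X] := qw * g₀ - 2 * bb with hv0
      set v : Fin N → F[X] := fun i => qw * g i - 2 * bb * q i with hv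
      have expand : ∑ i, h' i ^ 2
          = (∑ i, g i ^ 2) - 2 * g₀ * (∑ i, g i * q i) + g₀ ^ 2 * (∑ i, q i ^ 2) := by
        rw [Finset.mul_sum, Finset.mul_sum, ← Finset.sum_sub_distrib, ← Finset.sum_add_distrib]
        exact Finset.sum_congr rfl fun i _ => by rw [hgi i]; ring
      have key1 : g₀ * v0 = ∑ i, h' i ^ 2 := by
        rw [expand, ← heq, hv0, hqw, hbb]; ring
      have expand2 : ∑ i, v i ^ 2
          = qw ^ 2 * (∑ i, g i ^ 2) - 4 * qw * bb * (∑ i, g i * q i)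
            + 4 * bb ^ 2 * (∑ i, q i ^ 2) := by
        rw [Finset.mul_sum, Finset.mul_sum, Finset.mul_sum, ← Finset.sum_sub_distrib,
          ← Finset.sum_add_distrib]
        exact Finset.sum_congr rfl fun i _ => by simp only [hv]; ring
      have key2 : P * v0 ^ 2 = ∑ i, v i ^ 2 := by
        rw [expand2, ← heq, hv0, hqw, hbb]; ring
      have hv0ne : v0 ≠ 0 := fun h0 => hS (by rw [← key1, h0, mul_zero])
      have hdsum : (∑ i, h' i ^ 2).natDegree ≤ 2 * d - 2 := by
        apply Polynomial.natDegree_sum_le_of_forall_le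
        intro i _
        calc (h' i ^ 2).natDegree ≤ 2 * (h' i).natDegree := natDegree_pow_le
          _ ≤ 2 * d - 2 := by have := hdegh i; omega
      have hmul : g₀.natDegree + v0.natDegree = (∑ i, h' i ^ 2).natDegree := by
        rw [← key1, natDegree_mul hg0ne hv0ne]
      have hlt : v0.natDegree < d := by
        rw [hdeg, ← hd] at hmul
        omega
      refine Nat.find_min hQ
        (show (v0 * C v0.leadingCoeff⁻¹).natDegree < d by
          rw [natDegree_mul_leadingCoeff_inv _ hv0ne]; exact hlt)
        ⟨_, fun i => v i * C v0.leadingCoeff⁻¹,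
          monic_mul_leadingCoeff_inv hv0ne, rfl, ?_⟩
      rw [mul_pow, ← mul_assoc, key2, Finset.sum_mul]
      exact Finset.sum_congr rfl fun i _ => by ring

end CasselsSec
section RootRemoval
variable {K : Type*} [Field K]

lemma root_removal (hK : ¬ IsSumSq (-1 : K)) {N : ℕ} (f2 : K[X][X]) :
    ∀ (n : ℕ) (d : K[X]), d.natDegree ≤ n → d ≠ 0 →
    ∀ p : Fin N → K[X][X], (C d) ^ 2 * f2 = ∑ i, p i ^ 2 →
    ∃ g : K[X], (∀ a : K, g.eval a ≠ 0) ∧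
      ∃ p' : Fin N → K[X][X], (C g) ^ 2 * f2 = ∑ i, p' i ^ 2 := by
  intro n
  induction n with
  | zero =>
    intro d hdeg hd p heq
    obtain ⟨c, hc⟩ := Polynomial.natDegree_eq_zero.mp (Nat.le_zero.mp hdeg)
    refine ⟨d, fun a => ?_, p, heq⟩
    rw [← hc, eval_C]
    intro h0
    exact hd (by rw [← hc, h0, map_zero])
  | succ n ih =>
    intro d hdeg hd p heq
    by_cases hroot : ∃ a : K, d.eval a = 0
    · obtain ⟨a, ha⟩ := hroot
      obtain ⟨d', hd'⟩ := Polynomial.dvd_iff_isRoot.mpr ha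
      have hd'ne : d' ≠ 0 := fun h0 => hd (by rw [hd', h0, mul_zero])
      have hXa : (X - Polynomial.C a : K[X]) ≠ 0 := Polynomial.X_sub_C_ne_zero a
      have hdegd' : d'.natDegree ≤ n := by
        have h1 : d.natDegree = 1 + d'.natDegree := by
          rw [hd', natDegree_mul hXa hd'ne, natDegree_X_sub_C]
        omega
      have hmap : ∑ i, ((p i).map (evalRingHom a)) ^ 2 = (0 : K[X]) := by
        have h2 := congrArg (Polynomial.mapRingHom (evalRingHom a)) heq
        simp only [map_mul, map_pow, map_sum, Polynomial.coe_mapRingHom,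
          Polynomial.map_C, coe_evalRingHom, ha, Polynomial.C_0] at h2
        rw [← h2]
        ring
      have hall : ∀ i, (p i).map (evalRingHom a) = 0 := fun i =>
        forall_eq_zero_of_sum_sq_poly_eq_zero hK hmap i
      have hdvd : ∀ i, Polynomial.C (X - Polynomial.C a : K[X]) ∣ p i := by
        intro i
        rw [Polynomial.C_dvd_iff_dvd_coeff]
        intro m
        rw [Polynomial.dvd_iff_isRoot]
        have h3 := congrArg (fun z : K[X] => z.coeff m) (hall i)
        simpa [Polynomial.coeff_map] using h3
      choose p'' hp'' using fun i => hdvd i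
      have hCne : (Polynomial.C (X - Polynomial.C a : K[X]) : K[X][X]) ≠ 0 := by
        rw [Ne, Polynomial.C_eq_zero]; exact hXa
      have heq' : (C d') ^ 2 * f2 = ∑ i, p'' i ^ 2 := by
        apply mul_left_cancel₀ (pow_ne_zero 2 hCne)
        calc (Polynomial.C (X - Polynomial.C a : K[X])) ^ 2 * ((C d') ^ 2 * f2)
            = (C d) ^ 2 * f2 := by rw [hd', map_mul]; ring
          _ = ∑ i, p i ^ 2 := heq
          _ = (Polynomial.C (X - Polynomial.C a : K[X])) ^ 2 * ∑ i, p'' i ^ 2 := by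
              rw [Finset.mul_sum]
              exact Finset.sum_congr rfl fun i _ => by rw [hp'' i]; ring
      exact ih d' hdegd' hd'ne p'' heq'
    · push_neg at hroot
      exact ⟨d, hroot, p, heq⟩

end RootRemoval

set_option synthInstance.maxHeartbeats 1000000
set_option maxHeartbeats 1000000


open MvPolynomial

/-- main theorem, case of `K²`: Let `K` be a formally real field and
`f ∈ K[x,y]`. If `f` is a sum of `N` squares in `K(x,y)`, then there exist a
one-variable polynomial `g ∈ K[x]` vanishing nowhere on `K` and polynomials
`f₁, …, f_N ∈ K[x,y]` with `g²·f = f₁² + ⋯ + f_N²`. -/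
theorem sos_denominator_in_one_variable (K : Type*) [Field K]
    (hK : ¬ IsSumSq (-1 : K))
    (f : MvPolynomial (Fin 2) K) (N : ℕ)
    (h : ∃ r : Fin N → FractionRing (MvPolynomial (Fin 2) K),
      algebraMap (MvPolynomial (Fin 2) K) (FractionRing (MvPolynomial (Fin 2) K)) f
        = ∑ i, r i ^ 2) :
    ∃ g : Polynomial K, (∀ a : K, Polynomial.eval a g ≠ 0) ∧
      ∃ p : Fin N → MvPolynomial (Fin 2) K,
        (Polynomial.aeval (MvPolynomial.X 0 : MvPolynomial (Fin 2) K) g) ^ 2 * f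
          = ∑ i, p i ^ 2 := by
  classical
  let e1 : MvPolynomial (Fin 1) K ≃ₐ[K] Polynomial K :=
    (MvPolynomial.finSuccEquiv K 0).trans
      (Polynomial.mapAlgEquiv (MvPolynomial.isEmptyAlgEquiv K (Fin 0)))
  let e : MvPolynomial (Fin 2) K ≃ₐ[K] Polynomial (Polynomial K) :=
    (MvPolynomial.renameEquiv K (Equiv.swap 0 1)).trans
      ((MvPolynomial.finSuccEquiv K 1).trans (Polynomial.mapAlgEquiv e1))
  have heX0 : e (MvPolynomial.X 0) = Polynomial.C Polynomial.X := by
    show (Polynomial.mapAlgEquiv e1)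
      ((MvPolynomial.finSuccEquiv K 1) ((MvPolynomial.renameEquiv K (Equiv.swap 0 1))
        (MvPolynomial.X 0))) = Polynomial.C Polynomial.X
    rw [MvPolynomial.renameEquiv_apply, MvPolynomial.rename_X, Equiv.swap_apply_left]
    have h1 : (1 : Fin 2) = Fin.succ 0 := rfl
    rw [h1, MvPolynomial.finSuccEquiv_X_succ]
    simp [e1, Polynomial.mapAlgEquiv, MvPolynomial.finSuccEquiv_X_zero]
  -- transfer the sum of squares hypothesis to J
  set ι : Polynomial K →+* RatFunc K := (algebraMap (Polynomial K) (RatFunc K)) with hι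
  set J := FractionRing (Polynomial (RatFunc K)) with hJ
  set ψ : MvPolynomial (Fin 2) K →+* J :=
    ((algebraMap (Polynomial (RatFunc K)) J).comp (Polynomial.mapRingHom ι)).comp
      (e : MvPolynomial (Fin 2) K →+* Polynomial (Polynomial K)) with hψ
  have hψinj : Function.Injective ψ := by
    refine ((IsFractionRing.injective (Polynomial (RatFunc K)) J).comp ?_).comp e.injective
    exact Polynomial.map_injective ι (IsFractionRing.injective (Polynomial K) (RatFunc K))
  obtain ⟨r, hr⟩ := h
  have hφ : ψ f = ∑ i, (IsFractionRing.lift hψinj (r i)) ^ 2 := by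
    have h2 := congrArg (IsFractionRing.lift (K := FractionRing (MvPolynomial (Fin 2) K)) hψinj) hr
    rw [IsFractionRing.lift_algebraMap, map_sum] at h2
    simp only [map_pow] at h2
    exact h2
  -- Cassels over RatFunc K
  have hFR : ¬ IsSumSq (-1 : RatFunc K) := not_isSumSq_neg_one_fraction hK (RatFunc K)
  have hsum : ∃ r' : Fin N → J,
      algebraMap (Polynomial (RatFunc K)) J ((e f).map ι) = ∑ i, r' i ^ 2 :=
    ⟨fun i => IsFractionRing.lift hψinj (r i), hφ⟩
  obtain ⟨qq, hqq⟩ := cassels hFR ((e f).map ι) J hsum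
  -- clear denominators
  set s : Finset (RatFunc K) :=
    Finset.univ.biUnion (fun i : Fin N => (qq i).support.image (qq i).coeff) with hs
  obtain ⟨b, hb⟩ := IsLocalization.exist_integer_multiples_of_finset (nonZeroDivisors (Polynomial K)) s
  have hbne : (b : Polynomial K) ≠ 0 := nonZeroDivisors.coe_ne_zero b
  have hlift : ∀ i, ∃ pi : Polynomial (Polynomial K),
      pi.map ι = Polynomial.C (ι (b : Polynomial K)) * qq i := by
    intro i
    have hmem : (Polynomial.C (ι (b : Polynomial K)) * qq i) ∈ Polynomial.lifts ι := by
      rw [Polynomial.lifts_iff_coeff_lifts]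
      intro m
      rw [Polynomial.coeff_C_mul]
      by_cases hm : (qq i).coeff m = 0
      · rw [hm, mul_zero]; exact ⟨0, map_zero ι⟩
      · have hmem2 : (qq i).coeff m ∈ s := Finset.mem_biUnion.mpr
          ⟨i, Finset.mem_univ i, Finset.mem_image.mpr
            ⟨m, Polynomial.mem_support_iff.mpr hm, rfl⟩⟩
        obtain ⟨x, hx⟩ := hb _ hmem2
        exact ⟨x, by rw [hx, Algebra.smul_def]⟩
    obtain ⟨pi, hpi⟩ := (Polynomial.mem_lifts _).mp hmem
    exact ⟨pi, hpi⟩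
  choose pp hpp using hlift
  have hmainJ : (Polynomial.C (b : Polynomial K)) ^ 2 * e f = ∑ i, pp i ^ 2 := by
    apply Polynomial.map_injective ι (IsFractionRing.injective (Polynomial K) (RatFunc K))
    calc ((Polynomial.C (b : Polynomial K)) ^ 2 * e f).map ι
        = (Polynomial.C (ι (b : Polynomial K))) ^ 2 * ((e f).map ι) := by
          rw [Polynomial.map_mul, Polynomial.map_pow, Polynomial.map_C]
      _ = ∑ i, (Polynomial.C (ι (b : Polynomial K)) * qq i) ^ 2 := by
          rw [hqq, Finset.mul_sum]
          exact Finset.sum_congr rfl fun i _ => by ring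
      _ = ∑ i, ((pp i).map ι) ^ 2 := Finset.sum_congr rfl fun i _ => by rw [hpp i]
      _ = (∑ i, pp i ^ 2).map ι := by
          rw [← Polynomial.coe_mapRingHom, map_sum]
          exact Finset.sum_congr rfl fun i _ => by rw [map_pow]
  -- remove the roots of the denominator
  obtain ⟨g, hg, p', hp'⟩ := root_removal hK (e f) (b : Polynomial K).natDegree
    (b : Polynomial K) le_rfl hbne pp hmainJ
  refine ⟨g, hg, fun i => e.symm (p' i), ?_⟩
  apply e.injective
  have h1 : e (Polynomial.aeval (MvPolynomial.X 0 : MvPolynomial (Fin 2) K) g)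
      = Polynomial.C g := by
    have h0 := Polynomial.aeval_algHom_apply (e.toAlgHom) (MvPolynomial.X 0) g
    change Polynomial.aeval (e (MvPolynomial.X 0)) g = e (Polynomial.aeval (MvPolynomial.X 0) g) at h0
    rw [← h0, heX0]
    have h2 := Polynomial.aeval_algHom_apply
      (Polynomial.CAlgHom (R := K) (A := Polynomial K)) Polynomial.X g
    rw [Polynomial.aeval_X_left_apply] at h2
    have h3 : (Polynomial.CAlgHom (R := K) (A := Polynomial K)) Polynomial.X
        = Polynomial.C Polynomial.X := rfl
    rw [h3] at h2
    rw [h2]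
    rfl
  rw [map_mul, map_pow, h1, map_sum]
  simp only [map_pow, AlgEquiv.apply_symm_apply]
  exact hp'
end

section
/- Let K be a formally real field, let S ⊆ K[x,y] be the multiplicative set of all polynomials g with g(a,b) ≠ 0 for every (a,b) ∈ K², and let O = S⁻¹K[x,y] be the localization (the ring of regular functions on K²). If f ∈ O is a sum of N squares in the rational function field K(x,y), then f is a sum of N squares in O. In particular, for every f ∈ O that is a sum of squares, the length of f in O equals the length of f in K(x,y). -/
open Polynomial in
private theorem myCharZero (K : Type*) [Field K] (hK : ¬ IsSumSq (-1 : K)) : CharZero K := by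
  have hnat : ∀ n : ℕ, IsSumSq ((n : K)) := by
    intro n
    induction n with
    | zero => simpa using IsSumSq.zero
    | succ n ih =>
      have : ((n+1 : ℕ) : K) = 1 * 1 + (n : K) := by push_cast; ring
      rw [this]; exact IsSumSq.sq_add 1 ih
  have h0 : ringChar K = 0 := by
    by_contra h
    have hpos : 0 < ringChar K := Nat.pos_of_ne_zero h
    have hcast : ((ringChar K : ℕ) : K) = 0 := ringChar.spec K (ringChar K) |>.mpr dvd_rfl
    have heq : (-1 : K) = ((ringChar K - 1 : ℕ) : K) := by
      have h2 : ((ringChar K - 1 : ℕ) : K) + 1 = ((ringChar K : ℕ) : K) := by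
        push_cast [Nat.cast_sub hpos]; ring
      rw [hcast] at h2; linear_combination -h2
    exact hK (heq ▸ hnat _)
  exact @CharP.charP_to_charZero K _ (h0 ▸ ringChar.charP K)

/-- pointwise reality: sum of squares zero implies each zero -/
private theorem real_field {K : Type*} [Field K] (hK : ¬ IsSumSq (-1 : K))
    {n : ℕ} (c : Fin n → K) (h : ∑ i, c i ^ 2 = 0) : ∀ i, c i = 0 := by
  by_contra hc
  push_neg at hc
  obtain ⟨j, hj⟩ := hc
  apply hK
  have h1 : ∑ i ∈ Finset.univ.erase j, c i ^ 2 = - c j ^ 2 := by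
    have h2 := Finset.add_sum_erase Finset.univ (fun i => c i ^ 2) (Finset.mem_univ j)
    linear_combination h2 + h
  have key : (-1 : K) = ∑ i ∈ Finset.univ.erase j, (c i * (c j)⁻¹) * (c i * (c j)⁻¹) := by
    calc (-1 : K) = (- c j ^ 2) * ((c j)⁻¹ * (c j)⁻¹) := by rw [pow_two]; field_simp
      _ = (∑ i ∈ Finset.univ.erase j, c i ^ 2) * ((c j)⁻¹ * (c j)⁻¹) := by rw [h1]
      _ = ∑ i ∈ Finset.univ.erase j, (c i * (c j)⁻¹) * (c i * (c j)⁻¹) := by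
          rw [Finset.sum_mul]; exact Finset.sum_congr rfl fun i _ => by ring
  exact key ▸ IsSumSq.sum_mul_self _ _

private theorem real_poly {R : Type*} [CommRing R] [IsDomain R] [Infinite R]
    (hR : ∀ {n : ℕ} (c : Fin n → R), ∑ i, c i ^ 2 = 0 → ∀ i, c i = 0)
    {n : ℕ} (c : Fin n → Polynomial R) (h : ∑ i, c i ^ 2 = 0) : ∀ i, c i = 0 := by
  intro i
  apply Polynomial.eq_zero_of_infinite_isRoot
  have : {x : R | (c i).IsRoot x} = Set.univ := by
    ext α
    simp only [Set.mem_setOf_eq, Set.mem_univ, iff_true]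
    have := congrArg (Polynomial.eval α) h
    simp only [Polynomial.eval_finset_sum, Polynomial.eval_pow, Polynomial.eval_zero] at this
    exact hR (fun j => (c j).eval α) this i
  rw [this]; exact Set.infinite_univ

private theorem real_frac {R : Type*} [CommRing R] [IsDomain R]
    (hR : ∀ {n : ℕ} (c : Fin n → R), ∑ i, c i ^ 2 = 0 → ∀ i, c i = 0)
    {n : ℕ} (c : Fin n → FractionRing R) (h : ∑ i, c i ^ 2 = 0) : ∀ i, c i = 0 := by
  obtain ⟨b, hb⟩ := IsLocalization.exist_integer_multiples (nonZeroDivisors R) Finset.univ c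
  choose a ha using fun i => hb i (Finset.mem_univ i)
  have halg : ∀ i, algebraMap R (FractionRing R) (a i) = algebraMap R _ (b : R) * c i := by
    intro i; rw [ha i, Algebra.smul_def]
  have hsum : ∑ i, (algebraMap R (FractionRing R) (a i)) ^ 2 = 0 := by
    calc ∑ i, (algebraMap R (FractionRing R) (a i)) ^ 2
        = (algebraMap R (FractionRing R) (b : R))^2 * ∑ i, c i ^ 2 := by
          rw [Finset.mul_sum]; exact Finset.sum_congr rfl fun i _ => by rw [halg i]; ring
      _ = 0 := by rw [h, mul_zero]
  have hinj := IsFractionRing.injective R (FractionRing R)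
  have hsum' : ∑ i, a i ^ 2 = 0 := by
    apply hinj; rw [map_sum, map_zero]; simpa using hsum
  intro i
  have hai := hR a hsum' i
  have hb0 : algebraMap R (FractionRing R) (b : R) ≠ 0 := by
    simpa using (IsFractionRing.to_map_eq_zero_iff (K := FractionRing R)).not.mpr
      (nonZeroDivisors.ne_zero b.prop)
  have := halg i
  rw [hai, map_zero] at this
  rcases mul_eq_zero.mp this.symm with h' | h'
  · exact absurd h' hb0
  · exact h'

section CPsec
open Polynomial



/-- Cassels–Pfister for sums of squares: bounded-degree strong induction core. -/
private theorem CP_aux {F : Type*} [Field F]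
    (hreal : ∀ {n : ℕ} (c : Fin n → Polynomial F), ∑ i, c i ^ 2 = 0 → ∀ i, c i = 0) :
    ∀ (d : ℕ) (q : Polynomial F), q ≠ 0 → q.natDegree ≤ d →
      ∀ (N : ℕ) (p : Polynomial F) (a : Fin N → Polynomial F),
        p * q ^ 2 = ∑ i, a i ^ 2 → ∃ b : Fin N → Polynomial F, p = ∑ i, b i ^ 2 := by
  intro d
  induction d with
  | zero =>
    intro q hq0 hqd N p a hP
    -- q is a nonzero constant
    obtain ⟨c0, rfl⟩ : ∃ c0, q = C c0 := ⟨_, eq_C_of_natDegree_eq_zero (Nat.le_zero.mp hqd)⟩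
    have hc0 : c0 ≠ 0 := fun h => hq0 (by rw [h, map_zero])
    refine ⟨fun i => C c0⁻¹ * a i, ?_⟩
    have hone : (C c0⁻¹) ^ 2 * (C c0) ^ 2 = 1 := by
      rw [← mul_pow, ← map_mul, inv_mul_cancel₀ hc0]; simp
    calc p = (C c0⁻¹) ^ 2 * (p * (C c0) ^ 2) := by
          rw [show (C c0⁻¹) ^ 2 * (p * (C c0) ^ 2) = ((C c0⁻¹) ^ 2 * (C c0) ^ 2) * p by ring,
            hone, one_mul]
      _ = (C c0⁻¹) ^ 2 * ∑ i, a i ^ 2 := by rw [hP]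
      _ = ∑ i, (C c0⁻¹ * a i) ^ 2 := by
          rw [Finset.mul_sum]; exact Finset.sum_congr rfl fun i _ => by ring
  | succ d ih =>
    intro q hq0 hqd N p a hP
    -- monicize
    set k := q.leadingCoeff with hk
    have hk0 : k ≠ 0 := leadingCoeff_ne_zero.mpr hq0
    set q₁ := q * C k⁻¹ with hq₁
    have hq₁m : q₁.Monic := monic_mul_leadingCoeff_inv hq0
    have hq₁0 : q₁ ≠ 0 := hq₁m.ne_zero
    have hq₁d : q₁.natDegree = q.natDegree := by
      rw [hq₁, natDegree_mul hq0 (fun h => by simp [inv_eq_zero.mp (C_eq_zero.mp h)] at hk0)]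
      simp
    set a₁ : Fin N → Polynomial F := fun i => C k⁻¹ * a i with ha₁
    have hP₁ : p * q₁ ^ 2 = ∑ i, a₁ i ^ 2 := by
      calc p * q₁ ^ 2 = (C k⁻¹) ^ 2 * (p * q ^ 2) := by rw [hq₁]; ring
        _ = (C k⁻¹) ^ 2 * ∑ i, a i ^ 2 := by rw [hP]
        _ = ∑ i, a₁ i ^ 2 := by
            rw [Finset.mul_sum]; exact Finset.sum_congr rfl fun i _ => by rw [ha₁]; ring
    clear_value q₁ a₁
    clear hP hq₁ ha₁
    -- if q₁ has degree 0 we are in the base case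
    rcases Nat.eq_zero_or_pos q₁.natDegree with hdeg0 | hdegpos
    · have hone : q₁ = 1 := hq₁m.natDegree_eq_zero.mp hdeg0
      exact ⟨a₁, by rw [hone] at hP₁; simpa using hP₁⟩
    -- division
    · set b : Fin N → Polynomial F := fun i => a₁ i /ₘ q₁ with hb
      set c : Fin N → Polynomial F := fun i => a₁ i %ₘ q₁ with hc
      have hdiv : ∀ i, a₁ i = q₁ * b i + c i := fun i => by
        have := modByMonic_add_div (a₁ i) q₁
        rw [hb, hc]; simp only; linear_combination -this
      by_cases hcz : ∀ i, c i = 0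
      · -- exact division
        refine ⟨b, ?_⟩
        have : p * q₁ ^ 2 = (∑ i, b i ^ 2) * q₁ ^ 2 := by
          rw [hP₁, Finset.sum_mul]
          exact Finset.sum_congr rfl fun i _ => by
            rw [hdiv i, hcz i, add_zero]; ring
        exact mul_right_cancel₀ (pow_ne_zero 2 hq₁0) this
      · push_neg at hcz
        obtain ⟨j, hj⟩ := hcz
        set m := ∑ i, a₁ i * b i with hm
        set β := ∑ i, b i ^ 2 with hβ
        set q' := p * q₁ - 2 * m + q₁ * β with hq'
        set τ := p * q₁ - m with hτ
        -- u = Σ c i ^2 = q₁ * q'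
        have hu : ∑ i, c i ^ 2 = q₁ * q' := by
          have expand : ∀ i, c i ^ 2 = a₁ i ^ 2 - 2 * q₁ * (a₁ i * b i) + q₁ ^ 2 * b i ^ 2 := by
            intro i; have h := hdiv i; linear_combination (q₁ * b i - a₁ i - c i) * h
          calc ∑ i, c i ^ 2
              = ∑ i, (a₁ i ^ 2 - 2 * q₁ * (a₁ i * b i) + q₁ ^ 2 * b i ^ 2) :=
                Finset.sum_congr rfl fun i _ => expand i
            _ = (∑ i, a₁ i ^ 2) - 2 * q₁ * m + q₁ ^ 2 * β := by
                rw [hm, hβ, Finset.sum_add_distrib, Finset.sum_sub_distrib,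
                  ← Finset.mul_sum, ← Finset.mul_sum]
            _ = q₁ * q' := by rw [← hP₁, hq']; ring
        have hu0 : ∑ i, c i ^ 2 ≠ 0 := fun h => hj (hreal c h j)
        have hq'0 : q' ≠ 0 := fun h => hu0 (by rw [hu, h, mul_zero])
        -- degree bound
        have hdegc : ∀ i, (c i).natDegree ≤ q₁.natDegree - 1 := by
          intro i
          rcases eq_or_ne (c i) 0 with h0 | h0
          · rw [h0, natDegree_zero]; omega
          · have hdlt : (c i).degree < q₁.degree := by
              rw [hc]; exact degree_modByMonic_lt (a₁ i) hq₁m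
            have hlt : (c i).natDegree < q₁.natDegree := natDegree_lt_natDegree h0 hdlt
            omega
        have hdegu : (∑ i, c i ^ 2).natDegree ≤ 2 * q₁.natDegree - 2 := by
          apply natDegree_sum_le_of_forall_le
          intro i _
          calc (c i ^ 2).natDegree ≤ 2 * (c i).natDegree := natDegree_pow_le
            _ ≤ 2 * (q₁.natDegree - 1) := by have := hdegc i; omega
            _ ≤ 2 * q₁.natDegree - 2 := by omega
        have hdegq' : q'.natDegree ≤ d := by
          rw [hu, natDegree_mul hq₁0 hq'0] at hdegu
          have hq₁le : q₁.natDegree ≤ d + 1 := by rw [hq₁d]; exact hqd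
          omega
        -- reflection
        have ht : ∑ i, a₁ i * c i = q₁ * τ := by
          have expand : ∀ i, a₁ i * c i = a₁ i ^ 2 - q₁ * (a₁ i * b i) := by
            intro i; have h := hdiv i; linear_combination (-(a₁ i)) * h
          calc ∑ i, a₁ i * c i
              = ∑ i, (a₁ i ^ 2 - q₁ * (a₁ i * b i)) := Finset.sum_congr rfl fun i _ => expand i
            _ = (∑ i, a₁ i ^ 2) - q₁ * m := by rw [hm, Finset.sum_sub_distrib, ← Finset.mul_sum]
            _ = q₁ * τ := by rw [← hP₁, hτ]; ring
        set a' : Fin N → Polynomial F := fun i => a₁ i * (β - p) + 2 * b i * τ with ha'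
        have key1 : ∀ i, q₁ * a' i = a₁ i * q' - 2 * τ * c i := by
          intro i
          have h := hdiv i
          rw [ha', hq', hτ]
          linear_combination (2 * m - 2 * p * q₁) * h
        have key2 : p * q' ^ 2 = ∑ i, a' i ^ 2 := by
          have main : q₁ ^ 2 * (∑ i, a' i ^ 2) = q₁ ^ 2 * (p * q' ^ 2) := by
            have expand : ∀ i, (q₁ * a' i) ^ 2
                = q' ^ 2 * a₁ i ^ 2 - (4 * τ * q') * (a₁ i * c i) + (4 * τ ^ 2) * c i ^ 2 := by
              intro i; rw [key1 i]; ring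
            calc q₁ ^ 2 * (∑ i, a' i ^ 2)
                = ∑ i, (q₁ * a' i) ^ 2 := by
                  rw [Finset.mul_sum]; exact Finset.sum_congr rfl fun i _ => by ring
              _ = q' ^ 2 * (∑ i, a₁ i ^ 2) - (4 * τ * q') * (∑ i, a₁ i * c i)
                    + (4 * τ ^ 2) * (∑ i, c i ^ 2) := by
                  rw [Finset.sum_congr rfl fun i _ => expand i, Finset.sum_add_distrib,
                    Finset.sum_sub_distrib, ← Finset.mul_sum, ← Finset.mul_sum, ← Finset.mul_sum]
              _ = q' ^ 2 * (p * q₁ ^ 2) - (4 * τ * q') * (q₁ * τ) + (4 * τ ^ 2) * (q₁ * q') := by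
                  rw [← hP₁, ht, hu]
              _ = q₁ ^ 2 * (p * q' ^ 2) := by ring
          exact (mul_left_cancel₀ (pow_ne_zero 2 hq₁0) main).symm
        exact ih q' hq'0 hdegq' N p a' key2

end CPsec

open MvPolynomial

noncomputable section

private def E2 (K : Type*) [Field K] : MvPolynomial (Fin 1) K ≃ₐ[K] Polynomial K :=
  (MvPolynomial.finSuccEquiv K 0).trans
    (Polynomial.mapAlgEquiv (MvPolynomial.isEmptyAlgEquiv K (Fin 0)))

private def EE (K : Type*) [Field K] : MvPolynomial (Fin 2) K ≃+* Polynomial (Polynomial K) :=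
  (MvPolynomial.finSuccEquiv K 1).toRingEquiv.trans (Polynomial.mapEquiv (E2 K).toRingEquiv)

private theorem E2_C {K : Type*} [Field K] (k : K) : E2 K (C k) = Polynomial.C k := by
  simp [E2, finSuccEquiv_apply]
  exact MvPolynomial.coeff_zero_C k

private theorem E2_X {K : Type*} [Field K] : E2 K (X 0) = Polynomial.X := by
  simp [E2, finSuccEquiv_X_zero]

private theorem EE_C {K : Type*} [Field K] (k : K) :
    EE K (C k) = Polynomial.C (Polynomial.C k) := by
  simp only [EE, RingEquiv.coe_trans, Function.comp_apply, AlgEquiv.toRingEquiv_eq_coe,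
    AlgEquiv.coe_ringEquiv, Polynomial.mapEquiv_apply]
  rw [show (MvPolynomial.finSuccEquiv K 1) (C k) = Polynomial.C (C k) by
    simp [finSuccEquiv_apply]]
  rw [Polynomial.map_C]
  congr 1
  exact E2_C k

private theorem EE_X0 {K : Type*} [Field K] :
    EE K (X 0) = Polynomial.X := by
  simp only [EE, RingEquiv.coe_trans, Function.comp_apply, AlgEquiv.toRingEquiv_eq_coe,
    AlgEquiv.coe_ringEquiv, Polynomial.mapEquiv_apply, finSuccEquiv_X_zero]
  rw [Polynomial.map_X]

private theorem EE_X1 {K : Type*} [Field K] :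
    EE K (X 1) = Polynomial.C (Polynomial.X) := by
  simp only [EE, RingEquiv.coe_trans, Function.comp_apply, AlgEquiv.toRingEquiv_eq_coe,
    AlgEquiv.coe_ringEquiv, Polynomial.mapEquiv_apply]
  rw [show (X (1 : Fin 2)) = X ((0 : Fin 1).succ) by norm_num, finSuccEquiv_X_succ,
    Polynomial.map_C]
  congr 1
  exact E2_X

/-- the evaluation bridge -/
private theorem EE_eval {K : Type*} [Field K] (v : Fin 2 → K) (w : MvPolynomial (Fin 2) K) :
    MvPolynomial.eval v w
      = Polynomial.eval₂ (Polynomial.evalRingHom (v 1)) (v 0) (EE K w) := by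
  have h : (MvPolynomial.eval v)
      = (Polynomial.eval₂RingHom (Polynomial.evalRingHom (v 1)) (v 0)).comp
          (EE K : MvPolynomial (Fin 2) K →+* Polynomial (Polynomial K)) := by
    apply MvPolynomial.ringHom_ext
    · intro r
      simp [EE_C]
    · intro i
      match i with
      | 0 => simp [EE_X0]
      | 1 => simp [EE_X1]
  calc MvPolynomial.eval v w
      = ((Polynomial.eval₂RingHom (Polynomial.evalRingHom (v 1)) (v 0)).comp
          (EE K : MvPolynomial (Fin 2) K →+* Polynomial (Polynomial K))) w := by rw [← h]
    _ = _ := rfl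

end

noncomputable section

variable {K : Type*} [Field K]

private def iot (K : Type*) [Field K] : Polynomial K →+* MvPolynomial (Fin 2) K :=
  ((EE K).symm : Polynomial (Polynomial K) →+* MvPolynomial (Fin 2) K).comp Polynomial.C

private theorem iot_apply (h : Polynomial K) : iot K h = (EE K).symm (Polynomial.C h) := rfl

private theorem iot_inj : Function.Injective (iot K) :=
  (EE K).symm.injective.comp (Polynomial.C_injective)

private abbrev FF (K : Type*) [Field K] := FractionRing (Polynomial K)

private def psi (K : Type*) [Field K] : MvPolynomial (Fin 2) K →+* Polynomial (FF K) :=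
  (Polynomial.mapRingHom (algebraMap (Polynomial K) (FF K))).comp
    ((EE K) : MvPolynomial (Fin 2) K →+* Polynomial (Polynomial K))

private theorem psi_inj : Function.Injective (psi K) := by
  apply Function.Injective.comp (g := (Polynomial.mapRingHom (algebraMap (Polynomial K) (FF K))))
  · exact Polynomial.map_injective _ (IsFractionRing.injective _ _)
  · exact (EE K).injective

private theorem psi_iot (h : Polynomial K) :
    psi K (iot K h) = Polynomial.C (algebraMap (Polynomial K) (FF K) h) := by
  rw [iot_apply]
  show (Polynomial.mapRingHom _) ((EE K) ((EE K).symm (Polynomial.C h))) = _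
  rw [RingEquiv.apply_symm_apply]
  simp

/-- Main lemma 1: from arbitrary denominator to denominator in K[x] only. -/
private theorem M1 {K : Type*} [Field K]
    (hrealPF : ∀ {n : ℕ} (c : Fin n → Polynomial (FF K)), ∑ i, c i ^ 2 = 0 → ∀ i, c i = 0)
    {N : ℕ} (P D : MvPolynomial (Fin 2) K) (hD : D ≠ 0) (A : Fin N → MvPolynomial (Fin 2) K)
    (hPD : P * D ^ 2 = ∑ i, A i ^ 2) :
    ∃ h : Polynomial K, h ≠ 0 ∧
      ∃ B : Fin N → MvPolynomial (Fin 2) K, P * (iot K h) ^ 2 = ∑ i, B i ^ 2 := by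
  have hψD : psi K D ≠ 0 := fun h => hD (psi_inj (by rw [h, map_zero]))
  have hψP : psi K P * (psi K D) ^ 2 = ∑ i, (psi K (A i)) ^ 2 := by
    have := congrArg (psi K) hPD
    simpa [map_mul, map_pow, map_sum] using this
  obtain ⟨β, hβ⟩ := CP_aux hrealPF (psi K D).natDegree (psi K D) hψD le_rfl N (psi K P)
    (fun i => psi K (A i)) hψP
  -- clear denominators of the β i
  have hnorm := fun i => IsLocalization.integerNormalization_map_to_map
    (nonZeroDivisors (Polynomial K)) (β i)
  choose b hb using hnorm
  set g : Fin N → Polynomial (Polynomial K) := fun i =>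
    IsLocalization.integerNormalization (nonZeroDivisors (Polynomial K)) (β i) with hgdef
  have halg : ∀ i, Polynomial.map (algebraMap (Polynomial K) (FF K)) (g i)
      = Polynomial.C (algebraMap (Polynomial K) (FF K) (b i : Polynomial K)) * β i := by
    intro i
    rw [hgdef, hb i]
    ext n
    simp [Polynomial.coeff_smul, Algebra.smul_def]
  set h : Polynomial K := ∏ i, (b i : Polynomial K) with hh
  have hh0 : h ≠ 0 := by
    rw [hh]
    apply Finset.prod_ne_zero_iff.mpr
    intro i _
    exact nonZeroDivisors.ne_zero (b i).prop
  refine ⟨h, hh0, fun i => (EE K).symm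
    (Polynomial.C (∏ j ∈ Finset.univ.erase i, (b j : Polynomial K)) * g i), ?_⟩
  apply psi_inj
  have hψB : ∀ i, psi K ((EE K).symm
      (Polynomial.C (∏ j ∈ Finset.univ.erase i, (b j : Polynomial K)) * g i))
      = Polynomial.C (algebraMap (Polynomial K) (FF K) h) * β i := by
    intro i
    show (Polynomial.mapRingHom (algebraMap (Polynomial K) (FF K))) ((EE K) ((EE K).symm _)) = _
    rw [RingEquiv.apply_symm_apply, Polynomial.coe_mapRingHom, Polynomial.map_mul,
      Polynomial.map_C, halg i, ← mul_assoc, ← Polynomial.C_mul, ← map_mul, hh,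
      Finset.prod_erase_mul _ _ (Finset.mem_univ i)]
  rw [map_sum]
  conv_lhs => rw [map_mul, map_pow, psi_iot]
  rw [hβ, Finset.sum_mul]
  refine Finset.sum_congr rfl fun i _ => ?_
  rw [map_pow, hψB i]
  ring


private theorem iot_eval (v : Fin 2 → K) (h : Polynomial K) :
    MvPolynomial.eval v (iot K h) = h.eval (v 1) := by
  rw [iot_apply, EE_eval v, RingEquiv.apply_symm_apply, Polynomial.eval₂_C]
  rfl

private theorem iot_ne_zero {h : Polynomial K} (hh : h ≠ 0) : iot K h ≠ 0 := by
  intro hc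
  apply hh
  rw [iot_apply] at hc
  have : (EE K).symm (Polynomial.C h) = (EE K).symm (Polynomial.C 0) := by
    rw [hc]; simp
  exact Polynomial.C_injective ((EE K).symm.injective this)


/-- Root removal. -/
private theorem M2 {K : Type*} [Field K] [Infinite K]
    (hreal : ∀ {n : ℕ} (c : Fin n → K), ∑ i, c i ^ 2 = 0 → ∀ i, c i = 0)
    {N : ℕ} (P : MvPolynomial (Fin 2) K) :
    ∀ (d : ℕ) (h : Polynomial K), h ≠ 0 → h.natDegree ≤ d →
      (∃ B : Fin N → MvPolynomial (Fin 2) K, P * (iot K h) ^ 2 = ∑ i, B i ^ 2) →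
      ∃ h₀ : Polynomial K, (∀ α : K, h₀.eval α ≠ 0) ∧
        ∃ B : Fin N → MvPolynomial (Fin 2) K, P * (iot K h₀) ^ 2 = ∑ i, B i ^ 2 := by
  intro d
  induction d with
  | zero =>
    intro h hh0 hhd hB
    refine ⟨h, fun α hα => ?_, hB⟩
    -- h is a nonzero constant, cannot vanish
    have : h = Polynomial.C (h.coeff 0) := Polynomial.eq_C_of_natDegree_eq_zero (Nat.le_zero.mp hhd)
    rw [this] at hα
    simp at hα
    exact hh0 (by rw [this, hα, map_zero])
  | succ d ih =>
    intro h hh0 hhd hB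
    by_cases hroot : ∀ α : K, h.eval α ≠ 0
    · exact ⟨h, hroot, hB⟩
    · push_neg at hroot
      obtain ⟨α, hα⟩ := hroot
      obtain ⟨B, hPB⟩ := hB
      obtain ⟨h₁, hh₁⟩ := (Polynomial.dvd_iff_isRoot.mpr hα)
      have hXsub : (Polynomial.X - Polynomial.C α) ≠ 0 := Polynomial.X_sub_C_ne_zero α
      have hh₁0 : h₁ ≠ 0 := fun hc => hh0 (by rw [hh₁, hc, mul_zero])
      have hdeg : h₁.natDegree ≤ d := by
        have := Polynomial.natDegree_mul hXsub hh₁0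
        rw [← hh₁, Polynomial.natDegree_X_sub_C] at this
        omega
      -- every B i is divisible by ξ := iot (X - C α)
      have hdvd : ∀ i : Fin N, ∃ B' : MvPolynomial (Fin 2) K,
          B i = iot K (Polynomial.X - Polynomial.C α) * B' := by
        intro i
        -- step 1 : B i vanishes on the line  y = α  (second coordinate α)
        have hvan : ∀ s : K, MvPolynomial.eval ![s, α] (B i) = 0 := by
          intro s
          have hv1 : (![s, α] : Fin 2 → K) 1 = α := rfl
          have hline : MvPolynomial.eval ![s, α] (P * (iot K h) ^ 2) = 0 := by
            rw [map_mul, map_pow, iot_eval, hv1, hα]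
            ring
          rw [hPB] at hline
          rw [map_sum] at hline
          have := hreal (fun j => MvPolynomial.eval ![s, α] (B j)) (by
            simpa [map_pow] using hline)
          exact this i
        -- step 2 : the polynomial map (evalRingHom α) (EE (B i)) is zero
        have hW : Polynomial.map (Polynomial.evalRingHom α) (EE K (B i)) = 0 := by
          apply Polynomial.eq_zero_of_infinite_isRoot
          have hsub : {x : K | Polynomial.IsRoot
              (Polynomial.map (Polynomial.evalRingHom α) (EE K (B i))) x} = Set.univ := by
            ext s
            simp only [Set.mem_setOf_eq, Set.mem_univ, iff_true, Polynomial.IsRoot]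
            have hb : Polynomial.eval₂ (Polynomial.evalRingHom α) s (EE K (B i)) = 0 := by
              have hv := EE_eval ![s, α] (B i)
              simp only [Matrix.cons_val_one, Matrix.head_cons, Matrix.cons_val_zero] at hv
              rw [← hv]; exact hvan s
            rw [Polynomial.eval_map]; exact hb
          rw [hsub]; exact Set.infinite_univ
        -- step 3 : every coefficient of EE (B i) is divisible by X - C α
        have hcoe : ∀ n : ℕ, (Polynomial.X - Polynomial.C α) ∣ (EE K (B i)).coeff n := by
          intro n
          rw [Polynomial.dvd_iff_isRoot]
          have := congrArg (fun p => Polynomial.coeff p n) hW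
          simpa [Polynomial.coeff_map] using this
        obtain ⟨T, hT⟩ := (Polynomial.C_dvd_iff_dvd_coeff _ _).mpr hcoe
        refine ⟨(EE K).symm T, ?_⟩
        apply (EE K).injective
        rw [map_mul, iot_apply, RingEquiv.apply_symm_apply, RingEquiv.apply_symm_apply]
        exact hT
      choose B' hB' using hdvd
      have hξ : iot K (Polynomial.X - Polynomial.C α) ≠ 0 := iot_ne_zero hXsub
      have hcancel : P * (iot K h₁) ^ 2 = ∑ i, B' i ^ 2 := by
        have hmain : (P * (iot K h₁) ^ 2) * (iot K (Polynomial.X - Polynomial.C α)) ^ 2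
            = (∑ i, B' i ^ 2) * (iot K (Polynomial.X - Polynomial.C α)) ^ 2 := by
          calc (P * (iot K h₁) ^ 2) * (iot K (Polynomial.X - Polynomial.C α)) ^ 2
              = P * (iot K ((Polynomial.X - Polynomial.C α) * h₁)) ^ 2 := by
                rw [map_mul]; ring
            _ = P * (iot K h) ^ 2 := by rw [← hh₁]
            _ = ∑ i, B i ^ 2 := hPB
            _ = ∑ i, (iot K (Polynomial.X - Polynomial.C α) * B' i) ^ 2 := by
                exact Finset.sum_congr rfl fun i _ => by rw [← hB' i]
            _ = (∑ i, B' i ^ 2) * (iot K (Polynomial.X - Polynomial.C α)) ^ 2 := by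
                rw [Finset.sum_mul]; exact Finset.sum_congr rfl fun i _ => by ring
        exact mul_right_cancel₀ (pow_ne_zero 2 hξ) hmain
      exact ih h₁ hh₁0 hdeg ⟨B', hcancel⟩


end

set_option maxHeartbeats 2000000 in
set_option synthInstance.maxHeartbeats 200000 in
/-- Let `K` be a formally real field, `S ⊆ K[x,y]` the multiplicative set
of polynomials vanishing nowhere on `K²`, and `O = S⁻¹K[x,y]`. If `f ∈ O` is a sum of
`N` squares in `K(x,y)`, then `f` is a sum of `N` squares in `O`. In particular, for
every `f ∈ O` which is a sum of squares, the length of `f` in `O` equals the length of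
`f` in `K(x,y)`. Here `φ` is the canonical embedding `O → K(x,y)`, characterized by
compatibility with the maps from `K[x,y]`. -/
theorem sos_length_regular_eq_length_rational (K : Type*) [Field K]
    (hK : ¬ IsSumSq (-1 : K))
    (S : Submonoid (MvPolynomial (Fin 2) K))
    (hS : ∀ g : MvPolynomial (Fin 2) K,
      g ∈ S ↔ ∀ v : Fin 2 → K, MvPolynomial.eval v g ≠ 0)
    (φ : Localization S →+* FractionRing (MvPolynomial (Fin 2) K))
    (hφ : ∀ p : MvPolynomial (Fin 2) K,
      φ (algebraMap (MvPolynomial (Fin 2) K) (Localization S) p)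
        = algebraMap (MvPolynomial (Fin 2) K) (FractionRing (MvPolynomial (Fin 2) K)) p) :
    (∀ (N : ℕ) (f : Localization S),
      (∃ r : Fin N → FractionRing (MvPolynomial (Fin 2) K), φ f = ∑ i, r i ^ 2) →
        ∃ b : Fin N → Localization S, f = ∑ i, b i ^ 2) ∧
    (∀ f : Localization S, IsSumSq f →
      sInf {n : ℕ | 0 < n ∧ ∃ b : Fin n → Localization S, f = ∑ i, b i ^ 2}
        = sInf {n : ℕ | 0 < n ∧
            ∃ r : Fin n → FractionRing (MvPolynomial (Fin 2) K), φ f = ∑ i, r i ^ 2}) := by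
  haveI : CharZero K := myCharZero K hK
  have hrealK : ∀ {n : ℕ} (c : Fin n → K), ∑ i, c i ^ 2 = 0 → ∀ i, c i = 0 :=
    fun c h => real_field hK c h
  have hrealPK : ∀ {n : ℕ} (c : Fin n → Polynomial K), ∑ i, c i ^ 2 = 0 → ∀ i, c i = 0 :=
    fun c h => real_poly (fun c h => hrealK c h) c h
  have hrealF : ∀ {n : ℕ} (c : Fin n → FF K), ∑ i, c i ^ 2 = 0 → ∀ i, c i = 0 :=
    fun c h => real_frac (fun c h => hrealPK c h) c h
  haveI : Infinite (FF K) :=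
    Infinite.of_injective (algebraMap (Polynomial K) (FF K)) (IsFractionRing.injective _ _)
  have hrealPF : ∀ {n : ℕ} (c : Fin n → Polynomial (FF K)), ∑ i, c i ^ 2 = 0 → ∀ i, c i = 0 :=
    fun c h => real_poly (fun c h => hrealF c h) c h
  set R := MvPolynomial (Fin 2) K with hRdef
  set L := FractionRing R with hLdef
  have part1 : ∀ (N : ℕ) (f : Localization S),
      (∃ r : Fin N → L, φ f = ∑ i, r i ^ 2) →
        ∃ b : Fin N → Localization S, f = ∑ i, b i ^ 2 := by
    intro N f ⟨r, hr⟩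
    obtain ⟨⟨u, s⟩, hus⟩ := IsLocalization.surj (M := S) f
    simp only at hus
    have hs0 : (s : R) ≠ 0 := by
      intro hc
      have := (hS (s : R)).mp s.prop (fun _ => 0)
      rw [hc, map_zero] at this
      exact this rfl
    -- move the relation to L
    have hφus : φ f * algebraMap R L (s : R) = algebraMap R L u := by
      have := congrArg φ hus
      rw [map_mul, hφ, hφ] at this
      exact this
    -- common denominator for r
    obtain ⟨D, hD⟩ := IsLocalization.exist_integer_multiples (nonZeroDivisors R) Finset.univ r
    choose A hA using fun i => hD i (Finset.mem_univ i)
    have hA' : ∀ i, algebraMap R L (A i) = algebraMap R L (D : R) * r i := by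
      intro i; rw [hA i, Algebra.smul_def]
    have hD0 : (D : R) ≠ 0 := nonZeroDivisors.ne_zero D.prop
    have hinj : Function.Injective (algebraMap R L) := IsFractionRing.injective R L
    -- the polynomial identity
    set P : R := u * (s : R) with hPdef
    have hkey : P * (D : R) ^ 2 = ∑ i, ((s : R) * A i) ^ 2 := by
      apply hinj
      rw [map_mul, map_pow, map_sum]
      simp only [map_pow]
      have hl : algebraMap R L P = φ f * (algebraMap R L (s : R)) ^ 2 := by
        rw [hPdef, map_mul, ← hφus]; ring
      rw [hl, hr]
      calc (∑ i, r i ^ 2) * algebraMap R L (s:R) ^ 2 * algebraMap R L (D:R) ^ 2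
          = ∑ i, (algebraMap R L (s:R) * (algebraMap R L (D:R) * r i)) ^ 2 := by
            rw [Finset.sum_mul, Finset.sum_mul]
            exact Finset.sum_congr rfl fun i _ => by ring
        _ = ∑ i, algebraMap R L ((s:R) * A i) ^ 2 := by
            refine Finset.sum_congr rfl fun i _ => ?_
            rw [← hA' i, map_mul]
    -- denominator in K[x] only
    obtain ⟨h, hh0, B, hB⟩ := M1 (fun c hc => hrealPF c hc) P D hD0 _ hkey
    -- remove the roots of h
    obtain ⟨h₀, hroots, B₀, hB₀⟩ := M2 (fun c hc => hrealK c hc) P h.natDegree h hh0 le_rfl ⟨B, hB⟩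
    -- iot K h₀ belongs to S
    have hmem : iot K h₀ ∈ S := by
      rw [hS]
      intro v
      rw [iot_eval]
      exact hroots (v 1)
    -- push identity to the localization
    set ψO := algebraMap R (Localization S) with hψOdef
    have hOid : ψO P * (ψO (iot K h₀)) ^ 2 = ∑ i, ψO (B₀ i) ^ 2 := by
      have := congrArg ψO hB₀
      rw [map_mul, map_pow, map_sum] at this
      simpa [map_pow] using this
    have hfP : ψO P = f * (ψO (s : R)) ^ 2 := by
      rw [hPdef, map_mul, ← hus]; ring
    have hunit : IsUnit (ψO ((s : R) * iot K h₀)) :=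
      IsLocalization.map_units (Localization S) (⟨(s : R) * iot K h₀, mul_mem s.prop hmem⟩ : S)
    obtain ⟨w, hw⟩ := hunit.exists_right_inv
    refine ⟨fun i => ψO (B₀ i) * w, ?_⟩
    have hform : ∀ i, (ψO (B₀ i) * w) ^ 2 = ψO (B₀ i) ^ 2 * w ^ 2 := fun i => by ring
    calc f = f * (ψO ((s : R) * iot K h₀) * w) ^ 2 := by rw [hw]; ring
      _ = (ψO P * (ψO (iot K h₀)) ^ 2) * w ^ 2 := by rw [hfP, map_mul]; ring
      _ = (∑ i, ψO (B₀ i) ^ 2) * w ^ 2 := by rw [hOid]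
      _ = ∑ i, (ψO (B₀ i) * w) ^ 2 := by
          rw [Finset.sum_mul]; exact Finset.sum_congr rfl fun i _ => by ring
  refine ⟨part1, fun f _ => ?_⟩
  apply congrArg sInf
  ext n
  constructor
  · rintro ⟨hn, b, hb⟩
    refine ⟨hn, fun i => φ (b i), ?_⟩
    rw [hb]
    rw [map_sum]
    exact Finset.sum_congr rfl fun i _ => by rw [map_pow]
  · rintro ⟨hn, r, hr⟩
    exact ⟨hn, part1 n f ⟨r, hr⟩⟩
end

section
/- Let k ∈ ℝ[x] be a polynomial of odd degree at least 3, let A = ℝ[x][y]/(y² − k(x)), and let F be the fraction field of A. Then there exists an element f ∈ A such that f is a sum of 2 squares in F but f is not a sum of 2 squares in A. Consequently, the Theorem of Cassels does not generalize to the coordinate rings of (even nonsingular) affine curves. -/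
open Polynomial

set_option maxSynthPendingDepth 3
set_option synthInstance.maxHeartbeats 1000000
set_option maxHeartbeats 2000000


-- coeff of p^2 + q^2 at top
private lemma sq_add_sq_aux {p q : Polynomial ℝ} (hq : q ≠ 0) (hle : p.natDegree ≤ q.natDegree) :
    (p ^ 2 + q ^ 2).natDegree = 2 * q.natDegree ∧ p ^ 2 + q ^ 2 ≠ 0 := by
  set M := q.natDegree with hM
  have hcp : (p ^ 2).coeff (M + M) = p.coeff M * p.coeff M := by
    rw [sq]; exact coeff_mul_add_eq_of_natDegree_le hle hle
  have hcq : (q ^ 2).coeff (M + M) = q.coeff M * q.coeff M := by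
    rw [sq]; exact coeff_mul_add_eq_of_natDegree_le le_rfl le_rfl
  have hqM : q.coeff M ≠ 0 := by
    rw [hM]; exact leadingCoeff_ne_zero.mpr hq
  have hcoeff : (p ^ 2 + q ^ 2).coeff (M + M) ≠ 0 := by
    rw [coeff_add, hcp, hcq]
    nlinarith [sq_nonneg (p.coeff M), sq_nonneg (q.coeff M), sq_pos_of_ne_zero hqM,
      sq_abs (p.coeff M), sq_abs (q.coeff M)]
  have hne : p ^ 2 + q ^ 2 ≠ 0 := fun h => hcoeff (by simp [h])
  have h1 : M + M ≤ (p ^ 2 + q ^ 2).natDegree := le_natDegree_of_ne_zero hcoeff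
  have h2 : (p ^ 2 + q ^ 2).natDegree ≤ M + M := by
    refine natDegree_add_le_of_degree_le ?_ ?_ <;> rw [natDegree_pow] <;> omega
  exact ⟨by omega, hne⟩

private lemma sq_add_sq_even {p q : Polynomial ℝ} (h : p ≠ 0 ∨ q ≠ 0) :
    Even ((p ^ 2 + q ^ 2).natDegree) ∧ p ^ 2 + q ^ 2 ≠ 0 := by
  rcases le_or_gt p.natDegree q.natDegree with hle | hlt
  · by_cases hq : q = 0
    · subst hq
      rcases h with hp | hp
      · have hd : p.natDegree = 0 := by simpa using hle
        constructor
        · simp [natDegree_pow]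
        · simpa using pow_ne_zero 2 hp
      · exact absurd rfl hp
    · obtain ⟨h1, h2⟩ := sq_add_sq_aux hq hle
      exact ⟨h1 ▸ even_two_mul _, h2⟩
  · have hp : p ≠ 0 := by
      intro h0; rw [h0, natDegree_zero] at hlt; omega
    obtain ⟨h1, h2⟩ := sq_add_sq_aux hp hlt.le
    rw [add_comm (q ^ 2)] at h1 h2
    exact ⟨h1 ▸ even_two_mul _, h2⟩

private lemma key_not_rep {k P a₁ a₂ b₁ b₂ : Polynomial ℝ}
    (hodd : Odd k.natDegree) (hdeg : 3 ≤ k.natDegree)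
    (hP : P.natDegree < k.natDegree)
    (hPe : P = (a₁ ^ 2 + a₂ ^ 2) + (b₁ ^ 2 + b₂ ^ 2) * k)
    (hQ : a₁ * b₁ + a₂ * b₂ ≠ 0) : False := by
  have hk0 : k ≠ 0 := fun h => by simp [h] at hdeg
  have hb : b₁ ≠ 0 ∨ b₂ ≠ 0 := by
    by_contra hc; push_neg at hc; simp [hc.1, hc.2] at hQ
  obtain ⟨hTeven, hT0⟩ := sq_add_sq_even hb
  have hSeven : Even ((a₁ ^ 2 + a₂ ^ 2).natDegree) := by
    by_cases ha1 : a₁ = 0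
    · by_cases ha2 : a₂ = 0
      · simp [ha1, ha2]
      · exact (sq_add_sq_even (Or.inr ha2)).1
    · exact (sq_add_sq_even (Or.inl ha1)).1
  have hm : ((b₁ ^ 2 + b₂ ^ 2) * k).natDegree = (b₁ ^ 2 + b₂ ^ 2).natDegree + k.natDegree :=
    natDegree_mul hT0 hk0
  have hmodd : Odd (((b₁ ^ 2 + b₂ ^ 2) * k).natDegree) := hm ▸ hTeven.add_odd hodd
  have hne : (a₁ ^ 2 + a₂ ^ 2).natDegree ≠ ((b₁ ^ 2 + b₂ ^ 2) * k).natDegree := by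
    intro h; rw [h] at hSeven; exact (Nat.not_even_iff_odd.mpr hmodd) hSeven
  rw [hPe] at hP
  rcases hne.lt_or_gt with hlt | hlt
  · rw [natDegree_add_eq_right_of_natDegree_lt hlt] at hP; omega
  · rw [natDegree_add_eq_left_of_natDegree_lt hlt] at hP; omega

open Polynomial

private lemma prime_piece (k : Polynomial ℝ) (hodd : Odd k.natDegree) (hdeg : 3 ≤ k.natDegree) :
    Prime ((X : Polynomial (Polynomial ℝ)) ^ 2 - C k) := by
  have hk0 : k ≠ 0 := fun h => by simp [h] at hdeg
  set K := FractionRing (Polynomial ℝ)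
  have hmap : ((X : Polynomial (Polynomial ℝ)) ^ 2 - C k).map (algebraMap (Polynomial ℝ) K)
      = X ^ 2 - C (algebraMap (Polynomial ℝ) K k) := by
    simp
  have hirr_map : Irreducible (((X : Polynomial (Polynomial ℝ)) ^ 2 - C k).map
      (algebraMap (Polynomial ℝ) K)) := by
    rw [hmap]
    apply X_pow_sub_C_irreducible_of_prime Nat.prime_two
    intro b hb
    obtain ⟨⟨p, q⟩, hpq⟩ := IsLocalization.surj (nonZeroDivisors (Polynomial ℝ)) b
    have hq0 : (q : Polynomial ℝ) ≠ 0 := nonZeroDivisors.ne_zero q.2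
    have h2 : algebraMap (Polynomial ℝ) K (k * (q : Polynomial ℝ) ^ 2)
        = algebraMap (Polynomial ℝ) K (p ^ 2) := by
      rw [map_mul, map_pow, map_pow, ← hb, ← hpq]; ring
    have h3 : k * (q : Polynomial ℝ) ^ 2 = p ^ 2 := IsFractionRing.injective (Polynomial ℝ) K h2
    have hp0 : p ≠ 0 := by
      intro h
      rw [h] at h3
      simp only [ne_eq, zero_pow, mul_eq_zero, pow_eq_zero_iff, OfNat.ofNat_ne_zero,
        not_false_eq_true] at h3
      tauto
    have hdegs := congrArg natDegree h3
    rw [natDegree_mul hk0 (pow_ne_zero 2 hq0), natDegree_pow, natDegree_pow] at hdegs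
    obtain ⟨t, ht⟩ := hodd
    omega
  have hg_monic : ((X : Polynomial (Polynomial ℝ)) ^ 2 - C k).Monic :=
    monic_X_pow_sub_C k two_ne_zero
  have hirr := Polynomial.Monic.irreducible_of_irreducible_map (algebraMap (Polynomial ℝ) K)
    _ hg_monic hirr_map
  exact UniqueFactorizationMonoid.irreducible_iff_prime.mp hirr

open Polynomial

private lemma construction (k : Polynomial ℝ) (hdeg : 3 ≤ k.natDegree) :
    ∃ (hh h₁ h₂ P cc : Polynomial ℝ), hh.Monic ∧ hh = h₁ ^ 2 + h₂ ^ 2 ∧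
      hh * P = hh ^ 2 + cc ^ 2 + k ∧ P.natDegree < k.natDegree := by
  classical
  have hk0 : k ≠ 0 := fun h => by simp [h] at hdeg
  -- choose sr with aeval (sr*I) k ≠ 0 and sr ≠ 0
  have hfin : ({t : ℝ | (Polynomial.aeval ((t : ℂ) * Complex.I)) k = 0} ∪ {0}).Finite := by
    apply Set.Finite.union _ (Set.finite_singleton 0)
    have hmapne : k.map (algebraMap ℝ ℂ) ≠ 0 := by
      refine (Polynomial.map_ne_zero_iff ?_).mpr hk0
      exact (algebraMap ℝ ℂ).injective
    have hroots := Polynomial.finite_setOf_isRoot hmapne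
    have hinj : Function.Injective (fun t : ℝ => (t : ℂ) * Complex.I) := by
      intro a b hab
      have := mul_right_cancel₀ Complex.I_ne_zero hab
      exact_mod_cast this
    have hsub : {t : ℝ | (Polynomial.aeval ((t : ℂ) * Complex.I)) k = 0}
        ⊆ (fun t : ℝ => (t : ℂ) * Complex.I) ⁻¹' {z | (k.map (algebraMap ℝ ℂ)).IsRoot z} := by
      intro t ht
      simp only [Set.mem_preimage, Set.mem_setOf_eq, IsRoot.def, Polynomial.eval_map] at *
      rwa [Polynomial.aeval_def] at ht
    exact Set.Finite.subset (Set.Finite.preimage hinj.injOn hroots) hsub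
  obtain ⟨s, hs⟩ := Set.Finite.exists_notMem hfin
  simp only [Set.mem_union, Set.mem_setOf_eq, Set.mem_singleton_iff, not_or] at hs
  obtain ⟨hks, hs0⟩ := hs
  set z : ℂ := (s : ℂ) * Complex.I with hz
  obtain ⟨β, hβ⟩ : ∃ β : ℂ, β ^ 2 = Polynomial.aeval z k :=
    IsAlgClosed.exists_pow_nat_eq _ (n := 2) (by norm_num)
  set x : ℝ := β.re with hx
  set y : ℝ := β.im with hy
  have hβxy : β = (x : ℂ) + (y : ℂ) * Complex.I := (Complex.re_add_im β).symm
  set cc : Polynomial ℝ := C (-(x / s)) * X + C y with hcc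
  set hh : Polynomial ℝ := X ^ 2 + C (s * s) with hhh
  have hh_eq : hh = X ^ 2 - C (-(s * s)) := by rw [hhh, map_neg, sub_neg_eq_add]
  have hh_monic : hh.Monic := by rw [hh_eq]; exact monic_X_pow_sub_C _ two_ne_zero
  have hh_deg : hh.natDegree = 2 := by rw [hh_eq]; exact natDegree_X_pow_sub_C
  -- evaluations
  have hsC : (s : ℂ) ≠ 0 := by exact_mod_cast hs0
  have ev_hh : Polynomial.aeval z hh = 0 := by
    rw [hhh]
    simp only [map_add, map_pow, aeval_X, aeval_C, Complex.coe_algebraMap]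
    rw [hz]
    push_cast
    linear_combination ((s : ℂ) ^ 2) * Complex.I_sq
  have ev_cc : Polynomial.aeval z cc = -(x : ℂ) * Complex.I + y := by
    rw [hcc]
    simp only [map_add, map_mul, aeval_X, aeval_C, Complex.coe_algebraMap]
    rw [hz]
    push_cast
    field_simp
  have ev_main : Polynomial.aeval z (cc ^ 2 + k) = 0 := by
    rw [map_add, map_pow, ev_cc, hβ.symm, hβxy]
    push_cast
    linear_combination ((x : ℂ) ^ 2 + (y : ℂ) ^ 2) * Complex.I_sq
  have hh_degW : hh.degree = 2 := by
    rw [hh_eq]; exact degree_X_pow_sub_C (by norm_num) _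
  -- divisibility
  have hdvd : hh ∣ cc ^ 2 + k := by
    rw [← modByMonic_eq_zero_iff_dvd hh_monic]
    set r : Polynomial ℝ := (cc ^ 2 + k) %ₘ hh with hr
    by_cases hr0 : r = 0
    · exact hr0
    have hrd : r.degree < 2 := by
      have h := degree_modByMonic_lt (cc ^ 2 + k) hh_monic
      rwa [hh_degW] at h
    have hrnd : r.natDegree ≤ 1 := by
      have := (natDegree_lt_iff_degree_lt (n := 2) hr0).mpr (by exact_mod_cast hrd)
      omega
    have hrX : r = C (r.coeff 1) * X + C (r.coeff 0) := eq_X_add_C_of_natDegree_le_one hrnd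
    -- aeval z r = 0
    have hdiv := modByMonic_add_div (cc ^ 2 + k) hh
    have evr : Polynomial.aeval z r = 0 := by
      have := congrArg (Polynomial.aeval z) hdiv
      rw [map_add, map_mul, ev_hh, ev_main, zero_mul, add_zero] at this
      exact this
    have evr' : Polynomial.aeval (starRingEnd ℂ z) r = 0 := by
      rw [Polynomial.aeval_conj, evr, map_zero]
    have hconjz : (starRingEnd ℂ) z = -z := by
      rw [hz, map_mul, Complex.conj_I, Complex.conj_ofReal]; ring
    rw [hconjz] at evr'
    rw [hrX] at evr evr'
    simp only [map_add, map_mul, aeval_X, aeval_C, Complex.coe_algebraMap] at evr evr'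
    -- evr : ↑(r.coeff 1) * z + ↑(r.coeff 0) = 0, evr' : ↑(r.coeff 1) * (-z) + ↑(r.coeff 0) = 0
    have hzne : z ≠ 0 := by
      rw [hz]; exact mul_ne_zero hsC Complex.I_ne_zero
    have h1 : (r.coeff 1 : ℂ) = 0 := by
      have h2 : (r.coeff 1 : ℂ) * (2 * z) = 0 := by linear_combination evr - evr'
      rcases mul_eq_zero.mp h2 with h | h
      · exact h
      · exact absurd h (by simp [hzne])
    have h0 : (r.coeff 0 : ℂ) = 0 := by linear_combination evr - z * h1
    have hc1 : r.coeff 1 = 0 := by exact_mod_cast h1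
    have hc0 : r.coeff 0 = 0 := by exact_mod_cast h0
    rw [hrX, hc1, hc0]
    simp
  obtain ⟨G, hG⟩ := hdvd
  have hccnd : cc.natDegree ≤ 1 := by
    rw [hcc]
    exact natDegree_linear_le
  have hsumnd : (cc ^ 2 + k).natDegree ≤ k.natDegree := by
    refine natDegree_add_le_of_degree_le ?_ le_rfl
    rw [natDegree_pow]
    omega
  have hGne : G ≠ 0 := by
    intro h
    rw [h, mul_zero] at hG
    have hknd : k.natDegree ≤ 2 := by
      have hk' : k = -(cc ^ 2) := by linear_combination hG
      rw [hk', natDegree_neg, natDegree_pow]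
      omega
    omega
  have hGnd : G.natDegree ≤ k.natDegree - 2 := by
    have h1 : (hh * G).natDegree = 2 + G.natDegree := by
      rw [natDegree_mul hh_monic.ne_zero hGne, hh_deg]
    rw [← hG] at h1
    omega
  refine ⟨hh, X, C s, hh + G, cc, hh_monic, ?_, ?_, ?_⟩
  · rw [hhh, show (C (s * s) : Polynomial ℝ) = C s * C s from map_mul C s s]
    ring
  · linear_combination -hG
  · have := natDegree_add_le hh G
    rw [hh_deg] at this
    omega


private lemma frac_sum_two_sq {A : Type*} [CommRing A] [IsDomain A] (u₁ u₂ h₁ h₂ H fA : A)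
    (hkey : u₁ ^ 2 + u₂ ^ 2 = H * fA) (hH : H = h₁ ^ 2 + h₂ ^ 2) (hHne : H ≠ 0) :
    ∃ b₁ b₂ : FractionRing A, algebraMap A (FractionRing A) fA = b₁ ^ 2 + b₂ ^ 2 := by
  set F := FractionRing A
  set φ := algebraMap A F with hφ
  have hφH : φ H ≠ 0 := fun h => hHne (IsFractionRing.to_map_eq_zero_iff.mp h)
  refine ⟨(φ u₁ * φ h₁ + φ u₂ * φ h₂) / φ H, (φ u₁ * φ h₂ - φ u₂ * φ h₁) / φ H, ?_⟩
  have hkeyF : φ u₁ ^ 2 + φ u₂ ^ 2 = φ H * φ fA := by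
    rw [← map_pow, ← map_pow, ← map_add, hkey, map_mul]
  have hHF : φ H = φ h₁ ^ 2 + φ h₂ ^ 2 := by
    rw [← map_pow, ← map_pow, ← map_add, hH]
  field_simp
  linear_combination (-(φ H)) * hkeyF + (φ u₁ ^ 2 + φ u₂ ^ 2) * hHF

/-- Let `k ∈ ℝ[x]` have odd degree at least 3, let
`A = ℝ[x][y]/(y² − k(x))` and let `F = Frac(A)`. Then there exists `f ∈ A` which is a
sum of 2 squares in `F` but not a sum of 2 squares in `A`; hence the Theorem of
Cassels does not generalize to coordinate rings of affine curves. -/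
theorem cassels_fails_for_coordinate_rings_of_curves
    (k : Polynomial ℝ) (hodd : Odd k.natDegree) (hdeg : 3 ≤ k.natDegree) :
    ∀ (I : Ideal (Polynomial (Polynomial ℝ))),
      I = Ideal.span {(Polynomial.X : Polynomial (Polynomial ℝ)) ^ 2 - Polynomial.C k} →
      ∃ f : Polynomial (Polynomial ℝ) ⧸ I,
        (∃ b₁ b₂ : FractionRing (Polynomial (Polynomial ℝ) ⧸ I),
          algebraMap (Polynomial (Polynomial ℝ) ⧸ I)
              (FractionRing (Polynomial (Polynomial ℝ) ⧸ I)) f = b₁ ^ 2 + b₂ ^ 2) ∧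
        ¬ ∃ c₁ c₂ : Polynomial (Polynomial ℝ) ⧸ I, f = c₁ ^ 2 + c₂ ^ 2 := by
  intro I hI
  subst hI
  have hk0 : k ≠ 0 := fun h => by simp [h] at hdeg
  set g : Polynomial (Polynomial ℝ) := X ^ 2 - C k with hg
  have hprime : Prime g := prime_piece k hodd hdeg
  haveI hIp : (Ideal.span {g}).IsPrime := (Ideal.span_singleton_prime hprime.ne_zero).mpr hprime
  haveI : IsDomain (Polynomial (Polynomial ℝ) ⧸ Ideal.span {g}) := Ideal.Quotient.isDomain _
  have hg_monic : g.Monic := by rw [hg]; exact monic_X_pow_sub_C k two_ne_zero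
  have hgd : g.natDegree = 2 := by rw [hg]; exact natDegree_X_pow_sub_C
  obtain ⟨hh, h₁, h₂, P, cc, hhmon, hhsq, hid, hPdeg⟩ := construction k hdeg
  set mkh := Ideal.Quotient.mk (Ideal.span {g}) with hmkh
  have mkhg0 : mkh g = 0 := Ideal.Quotient.eq_zero_iff_mem.mpr (Ideal.mem_span_singleton_self g)
  refine ⟨mkh (C P + C 2 * X), ?_, ?_⟩
  · -- sum of two squares in the fraction field
    have hCkey := congrArg (⇑(Polynomial.C : Polynomial ℝ →+* Polynomial (Polynomial ℝ))) hid
    simp only [map_mul, map_add, map_pow] at hCkey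
    have hC2 : (C (2 : Polynomial ℝ) : Polynomial (Polynomial ℝ)) = 2 := map_ofNat C 2
    have idB : (C hh + X) ^ 2 + (C cc) ^ 2 = C hh * (C P + C 2 * X) + g := by
      rw [hg, hC2]
      linear_combination -hCkey
    have key : mkh (C hh + X) ^ 2 + mkh (C cc) ^ 2 = mkh (C hh) * mkh (C P + C 2 * X) := by
      have h := congrArg mkh idB
      rw [map_add, map_add, map_pow, map_pow, map_mul, mkhg0, add_zero] at h
      exact h
    have hCh : (C hh : Polynomial (Polynomial ℝ)) = (C h₁) ^ 2 + (C h₂) ^ 2 := by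
      rw [hhsq]
      simp only [map_add, map_pow]
    have hkeyH : mkh (C hh) = mkh (C h₁) ^ 2 + mkh (C h₂) ^ 2 := by
      rw [hCh, map_add, map_pow, map_pow]
    have hHne : mkh (C hh) ≠ 0 := by
      intro h
      rw [hmkh, Ideal.Quotient.eq_zero_iff_mem, Ideal.mem_span_singleton] at h
      obtain ⟨E, hE⟩ := h
      have hhne : hh ≠ 0 := hhmon.ne_zero
      have hEne : E ≠ 0 := by
        rintro rfl
        rw [mul_zero] at hE
        exact hhne (by simpa using hE)
      have hdegs := congrArg natDegree hE
      rw [natDegree_C, natDegree_mul hprime.ne_zero hEne, hgd] at hdegs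
      omega
    exact frac_sum_two_sq (mkh (C hh + X)) (mkh (C cc)) (mkh (C h₁))
      (mkh (C h₂)) (mkh (C hh)) (mkh (C P + C 2 * X)) key hkeyH hHne
  · -- not a sum of two squares in the coordinate ring
    rintro ⟨c₁, c₂, hf⟩
    obtain ⟨p₁, rfl⟩ := Ideal.Quotient.mk_surjective c₁
    obtain ⟨p₂, rfl⟩ := Ideal.Quotient.mk_surjective c₂
    set r₁ := p₁ %ₘ g with hr₁
    set r₂ := p₂ %ₘ g with hr₂
    have hmk1 : mkh p₁ = mkh r₁ := by
      conv_lhs => rw [← modByMonic_add_div p₁ g]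
      rw [map_add, map_mul, mkhg0, zero_mul, add_zero]
    have hmk2 : mkh p₂ = mkh r₂ := by
      conv_lhs => rw [← modByMonic_add_div p₂ g]
      rw [map_add, map_mul, mkhg0, zero_mul, add_zero]
    have hgdegW : g.degree = 2 := by rw [hg]; exact degree_X_pow_sub_C (by norm_num) _
    have hrnd : ∀ r : Polynomial (Polynomial ℝ), r = p₁ %ₘ g ∨ r = p₂ %ₘ g →
        r.natDegree ≤ 1 := by
      intro r hr
      by_cases hr0 : r = 0
      · simp [hr0]
      have hrd : r.degree < g.degree := by
        rcases hr with h | h <;> rw [h] <;> exact degree_modByMonic_lt _ hg_monic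
      rw [hgdegW] at hrd
      have := (natDegree_lt_iff_degree_lt (n := 2) hr0).mpr (by exact_mod_cast hrd)
      omega
    have h1nd : r₁.natDegree ≤ 1 := hrnd r₁ (Or.inl hr₁)
    have h2nd : r₂.natDegree ≤ 1 := hrnd r₂ (Or.inr hr₂)
    set a₁ := r₁.coeff 0 with ha₁
    set b₁ := r₁.coeff 1 with hb₁
    set a₂ := r₂.coeff 0 with ha₂
    set b₂ := r₂.coeff 1 with hb₂
    have e₁ : r₁ = C b₁ * X + C a₁ := eq_X_add_C_of_natDegree_le_one h1nd
    have e₂ : r₂ = C b₂ * X + C a₂ := eq_X_add_C_of_natDegree_le_one h2nd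
    have hf' : mkh (r₁ ^ 2 + r₂ ^ 2) = mkh (C P + C 2 * X) := by
      rw [map_add, map_pow, map_pow, ← hmk1, ← hmk2]
      exact hf.symm
    have hsub : g ∣ (r₁ ^ 2 + r₂ ^ 2 - (C P + C 2 * X)) :=
      Ideal.mem_span_singleton.mp (Ideal.Quotient.eq.mp hf')
    set D : Polynomial (Polynomial ℝ) := C (a₁ ^ 2 + a₂ ^ 2 + (b₁ ^ 2 + b₂ ^ 2) * k - P)
        + C (2 * (a₁ * b₁ + a₂ * b₂) - 2) * X with hD
    have hsplit : D = (r₁ ^ 2 + r₂ ^ 2 - (C P + C 2 * X)) - C (b₁ ^ 2 + b₂ ^ 2) * g := by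
      rw [hD, e₁, e₂, hg]
      simp only [map_add, map_mul, map_pow, map_sub, map_ofNat]
      ring
    have hdD : g ∣ D := by
      rw [hsplit]
      exact dvd_sub hsub (dvd_mul_left g _)
    have hDnd : D.natDegree ≤ 1 := by
      rw [hD]
      refine le_trans (natDegree_add_le _ _) (max_le ?_ ?_)
      · exact le_trans (le_of_eq (natDegree_C _)) zero_le_one
      · refine le_trans natDegree_mul_le ?_
        rw [natDegree_C, natDegree_X]
    have hD0 : D = 0 := by
      by_contra hne
      obtain ⟨E, hE⟩ := hdD
      have hEne : E ≠ 0 := by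
        rintro rfl
        rw [mul_zero] at hE
        exact hne hE
      have hdegs := congrArg natDegree hE
      rw [natDegree_mul hprime.ne_zero hEne, hgd] at hdegs
      omega
    have hcoe0 : a₁ ^ 2 + a₂ ^ 2 + (b₁ ^ 2 + b₂ ^ 2) * k - P = 0 := by
      have h := congrArg (fun p : Polynomial (Polynomial ℝ) => p.coeff 0) hD0
      simp only [hD, coeff_add, coeff_C_mul, coeff_X_zero, mul_zero, add_zero,
        coeff_C_zero, coeff_zero] at h
      exact h
    have hcoe1 : 2 * (a₁ * b₁ + a₂ * b₂) - 2 = 0 := by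
      have h := congrArg (fun p : Polynomial (Polynomial ℝ) => p.coeff 1) hD0
      simp only [hD, coeff_add, coeff_C_mul, coeff_X_one, mul_one, coeff_zero,
        show ∀ a : Polynomial ℝ, (C a).coeff 1 = 0 from fun a => coeff_C_ne_zero one_ne_zero,
        zero_add] at h
      exact h
    have hQne : a₁ * b₁ + a₂ * b₂ ≠ 0 := by
      intro h
      rw [h, mul_zero, zero_sub, neg_eq_zero] at hcoe1
      exact two_ne_zero hcoe1
    exact key_not_rep hodd hdeg hPdeg (by linear_combination -hcoe0) hQne
end

section
/- Let m ∈ ℝ. The polynomial f_m = x⁴ + m·x² + 1 ∈ ℝ[x] is a sum of fourth powers of polynomials (i.e., there exist p₁, …, p_s ∈ ℝ[x] with f_m = p₁⁴ + ⋯ + p_s⁴) if and only if 0 ≤ m ≤ 6. -/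
/-!
Leading coefficients of a sum of even powers cannot cancel over an ordered ring, so if
`x⁴ + m x² + 1 = ∑ pᵢ⁴` then every `pᵢ = aᵢ x + bᵢ` is linear. Comparing coefficients gives
`∑ aᵢ⁴ = ∑ bᵢ⁴ = 1` and `m = 6 ∑ aᵢ² bᵢ²`, and `2 aᵢ² bᵢ² ≤ aᵢ⁴ + bᵢ⁴` yields `0 ≤ m ≤ 6`.
Conversely, `(x + 1)⁴ + (x - 1)⁴ = 2x⁴ + 12x² + 2`, so for `0 ≤ m ≤ 6` the polynomial is
`m/12 · ((x + 1)⁴ + (x - 1)⁴) + (1 - m/6) · (x⁴ + 1)` with nonnegative weights, which are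
fourth powers of reals.
-/

open Polynomial

namespace Polynomial

theorem mul_natDegree_le_natDegree_sum_pow {R ι : Type*} [CommRing R] [LinearOrder R]
    [IsStrictOrderedRing R] {n : ℕ} (hn : Even n) {s : Finset ι} {p : ι → R[X]} {i : ι}
    (hi : i ∈ s) : n * (p i).natDegree ≤ (∑ j ∈ s, p j ^ n).natDegree := by
  obtain ⟨j, hj, hjmax⟩ := s.exists_max_image (fun j => (p j).natDegree) ⟨i, hi⟩
  by_cases hpj : p j = 0
  · have hpi : (p i).natDegree = 0 := by simpa [hpj] using hjmax i hi
    simp [hpi]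
  have hcoeff : (∑ k ∈ s, p k ^ n).coeff (n * (p j).natDegree) =
      ∑ k ∈ s, (p k).coeff (p j).natDegree ^ n := by
    rw [finsetSum_coeff]
    exact Finset.sum_congr rfl fun k hk => coeff_pow_of_natDegree_le (hjmax k hk)
  have hpos : 0 < ∑ k ∈ s, (p k).coeff (p j).natDegree ^ n :=
    Finset.sum_pos' (fun k _ => hn.pow_nonneg _)
      ⟨j, hj, hn.pow_pos (leadingCoeff_ne_zero.mpr hpj)⟩
  calc n * (p i).natDegree ≤ n * (p j).natDegree := Nat.mul_le_mul_left n (hjmax i hi)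
    _ ≤ _ := le_natDegree_of_ne_zero (hcoeff ▸ hpos.ne')

section CommRing

variable {R : Type*} [CommRing R]

theorem C_mul_X_add_C_pow_four (a b : R) :
    (C a * X + C b) ^ 4 = C (a ^ 4) * X ^ 4 + C (4 * a ^ 3 * b) * X ^ 3
      + C (6 * a ^ 2 * b ^ 2) * X ^ 2 + C (4 * a * b ^ 3) * X + C (b ^ 4) := by
  simp only [C_mul, C_pow, C_ofNat]
  ring

theorem sum_coeffs_of_quartic_eq_sum_linear_pow_four {ι : Type*} {s : Finset ι} {a b : ι → R}
    {m : R} (h : X ^ 4 + C m * X ^ 2 + 1 = ∑ i ∈ s, (C (a i) * X + C (b i)) ^ 4) :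
    ∑ i ∈ s, a i ^ 4 = 1 ∧ ∑ i ∈ s, 6 * a i ^ 2 * b i ^ 2 = m ∧ ∑ i ∈ s, b i ^ 4 = 1 := by
  simp only [C_mul_X_add_C_pow_four] at h
  have hcoeff k := congrArg (coeff · k) h.symm
  simp only [finsetSum_coeff, coeff_add, coeff_C_mul, coeff_X_pow, coeff_X, coeff_C,
    coeff_one] at hcoeff
  exact ⟨by simpa using hcoeff 4, by simpa using hcoeff 2, by simpa using hcoeff 0⟩

theorem X_pow_four_add_C_mul_X_sq_add_one_eq (a : R) :
    X ^ 4 + C (12 * a) * X ^ 2 + 1 =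
      C a * ((X + 1) ^ 4 + (X - 1) ^ 4) + C (1 - 2 * a) * (X ^ 4 + 1) := by
  simp only [C_mul, C_sub, C_1, C_ofNat]
  ring

end CommRing

end Polynomial

theorem Finset.sum_six_mul_sq_mul_sq_le {R ι : Type*} [CommRing R] [LinearOrder R]
    [IsStrictOrderedRing R] (s : Finset ι) (a b : ι → R) :
    ∑ i ∈ s, 6 * a i ^ 2 * b i ^ 2 ≤ 3 * (∑ i ∈ s, a i ^ 4 + ∑ i ∈ s, b i ^ 4) := by
  rw [← Finset.sum_add_distrib, Finset.mul_sum]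
  exact Finset.sum_le_sum fun i _ => by nlinarith [sq_nonneg (a i ^ 2 - b i ^ 2)]

/-- For `m ∈ ℝ`, the polynomial `x⁴ + m·x² + 1 ∈ ℝ[x]` is a sum of
fourth powers of polynomials if and only if `0 ≤ m ≤ 6`. -/
theorem sum_of_fourth_powers_iff (m : ℝ) :
    (∃ (s : ℕ) (p : Fin s → Polynomial ℝ),
      (Polynomial.X : Polynomial ℝ) ^ 4 + Polynomial.C m * Polynomial.X ^ 2 + 1
        = ∑ i, p i ^ 4) ↔ (0 ≤ m ∧ m ≤ 6) := by
  constructor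
  · rintro ⟨s, p, h⟩
    have hlinear (i : Fin s) : (p i).natDegree ≤ 1 := by
      have hdeg : ((X : ℝ[X]) ^ 4 + C m * X ^ 2 + 1).natDegree ≤ 4 := by compute_degree
      have hsum := h ▸ mul_natDegree_le_natDegree_sum_pow (even_two_mul 2) (Finset.mem_univ i)
      omega
    choose a b hab using fun i => exists_eq_X_add_C_of_natDegree_le_one (hlinear i)
    simp only [hab] at h
    obtain ⟨ha, hm, hb⟩ := sum_coeffs_of_quartic_eq_sum_linear_pow_four h
    have hamgm := Finset.univ.sum_six_mul_sq_mul_sq_le a b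
    exact ⟨hm ▸ Finset.sum_nonneg fun i _ => by positivity, by linarith⟩
  · rintro ⟨hm0, hm6⟩
    obtain ⟨u, hu⟩ : ∃ u : ℝ, u ^ 4 = m / 12 :=
      ⟨_, Real.rpow_inv_natCast_pow (by positivity) four_ne_zero⟩
    obtain ⟨v, hv⟩ : ∃ v : ℝ, v ^ 4 = 1 - 2 * (m / 12) :=
      ⟨_, Real.rpow_inv_natCast_pow (by linarith) four_ne_zero⟩
    refine ⟨4, ![C u * (X + 1), C u * (X - 1), C v * X, C v], ?_⟩
    rw [show m = 12 * (m / 12) by ring, X_pow_four_add_C_mul_X_sq_add_one_eq, ← hv, ← hu]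
    simp only [Fin.sum_univ_four, Matrix.cons_val, mul_pow, C_pow]
    ring
end

section
/- For every real number m ≥ 0, the polynomial x⁴ + m·x² + 1 is a sum of fourth powers of rational functions: there exist r₁, …, r_s ∈ ℝ(x) with x⁴ + m·x² + 1 = r₁⁴ + ⋯ + r_s⁴. In particular, for m > 6 the polynomial x⁴ + m·x² + 1 is a sum of fourth powers in ℝ(x) but not a sum of fourth powers in ℝ[x], so the Theorem of Cassels fails for fourth powers. -/
open Polynomial


/-- `g` is a sum of fourth powers in `ℝ(x)`. -/
def IsS4 (g : RatFunc ℝ) : Prop :=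
  ∃ M : Multiset (RatFunc ℝ), g = (M.map (fun r => r ^ 4)).sum

lemma IsS4.pow4 (r : RatFunc ℝ) : IsS4 (r ^ 4) := ⟨{r}, by simp⟩

lemma IsS4.zero : IsS4 (0 : RatFunc ℝ) := ⟨0, by simp⟩

lemma IsS4.add {g h : RatFunc ℝ} (hg : IsS4 g) (hh : IsS4 h) : IsS4 (g + h) := by
  obtain ⟨M, rfl⟩ := hg; obtain ⟨N, rfl⟩ := hh
  exact ⟨M + N, by rw [Multiset.map_add, Multiset.sum_add]⟩

lemma IsS4.mul {g h : RatFunc ℝ} (hg : IsS4 g) (hh : IsS4 h) : IsS4 (g * h) := by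
  obtain ⟨M, rfl⟩ := hg
  induction M using Multiset.induction_on with
  | empty => simpa using IsS4.zero
  | cons r M ih =>
    rw [Multiset.map_cons, Multiset.sum_cons, add_mul]
    refine IsS4.add ?_ ih
    obtain ⟨N, rfl⟩ := hh
    refine ⟨N.map (fun b => r * b), ?_⟩
    rw [Multiset.map_map]
    simp only [Function.comp, mul_pow]
    exact (Multiset.sum_map_mul_left).symm

lemma IsS4.inv {g : RatFunc ℝ} (hg : IsS4 g) (hne : g ≠ 0) : IsS4 g⁻¹ := by
  have : g⁻¹ = (g⁻¹) ^ 4 * (g * (g * g)) := by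
    field_simp
  rw [this]
  exact (IsS4.pow4 g⁻¹).mul (hg.mul (hg.mul hg))

lemma exists_pow4 {α : ℝ} (hα : 0 ≤ α) : ∃ d : ℝ, d ^ 4 = α := by
  refine ⟨α ^ ((1:ℝ)/4), ?_⟩
  rw [← Real.rpow_natCast (α ^ ((1:ℝ)/4)) 4, ← Real.rpow_mul hα]
  norm_num

lemma IsS4.constMulPow4 {α : ℝ} (hα : 0 ≤ α) (p : ℝ[X]) :
    IsS4 ((algebraMap ℝ[X] (RatFunc ℝ)) (C α * p ^ 4)) := by
  obtain ⟨d, hd⟩ := exists_pow4 hα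
  have : (algebraMap ℝ[X] (RatFunc ℝ)) (C α * p ^ 4)
      = ((algebraMap ℝ[X] (RatFunc ℝ)) (C d * p)) ^ 4 := by
    rw [← map_pow, mul_pow, ← C_pow, hd]
  rw [this]
  exact IsS4.pow4 _

lemma base_identity (α β γ δ : ℝ) (h1 : 2*α + γ = 1) (A B : ℝ)
    (h2 : 12*α*β^2 = A) (h3 : 2*α*β^4 + δ = B) :
    (X^4 + C A * X^2 + C B : ℝ[X])
      = C α * (X + C β)^4 + C α * (X - C β)^4 + C γ * X^4 + C δ * 1^4 := by
  have hA : (C A : ℝ[X]) = 12 * C α * (C β)^2 := by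
    rw [← h2]; simp only [C_mul, C_pow, map_ofNat]
  have hB : (C B : ℝ[X]) = 2 * C α * (C β)^4 + C δ := by
    rw [← h3]; simp only [C_add, C_mul, C_pow, map_ofNat]
  have h1' : (2 * C α + C γ : ℝ[X]) = 1 := by
    rw [← C_1, ← h1]; simp only [C_add, C_mul, map_ofNat]
  linear_combination (X:ℝ[X])^2 * hA + hB - (X:ℝ[X])^4 * h1'

lemma IsS4.base {A B : ℝ} (hA : 0 ≤ A) (hB : 0 < B) (h : A^2 ≤ 36*B) :
    IsS4 ((algebraMap ℝ[X] (RatFunc ℝ)) (X^4 + C A * X^2 + C B)) := by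
  set sB : ℝ := Real.sqrt B with hsB
  have hsBpos : 0 < sB := Real.sqrt_pos.mpr hB
  have hsq : sB^2 = B := Real.sq_sqrt hB.le
  set α : ℝ := A/(12*sB) with hα
  set β : ℝ := Real.sqrt sB with hβ
  set γ : ℝ := 1 - A/(6*sB) with hγ
  set δ : ℝ := B * (1 - A/(6*sB)) with hδ
  have hβ2 : β^2 = sB := Real.sq_sqrt hsBpos.le
  have hβ4 : β^4 = B := by rw [show β^4 = (β^2)^2 by ring, hβ2, hsq]
  have hA6 : A ≤ 6*sB := by nlinarith
  have hαnn : 0 ≤ α := by positivity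
  have hγnn : 0 ≤ γ := by
    rw [hγ, sub_nonneg, div_le_one (by positivity)]; linarith
  have hδnn : 0 ≤ δ := by
    rw [hδ]
    apply mul_nonneg hB.le
    rw [sub_nonneg, div_le_one (by positivity)]; linarith
  have h1 : 2*α + γ = 1 := by rw [hα, hγ]; field_simp; ring
  have h2 : 12*α*β^2 = A := by rw [hα, hβ2]; field_simp
  have h3 : 2*α*β^4 + δ = B := by rw [hα, hβ4, hδ]; field_simp; ring
  rw [base_identity α β γ δ h1 A B h2 h3]
  simp only [map_add]
  exact (((IsS4.constMulPow4 hαnn _).add (IsS4.constMulPow4 hαnn _)).add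
    (IsS4.constMulPow4 hγnn _)).add (IsS4.constMulPow4 hδnn _)

lemma four_quad (t u a b : ℝ) :
    ((X^4 + C (t+u)*X^2 + C (t*u)) * (X^4 + C (a+b)*X^2 + C (a*b)) : ℝ[X])
      = (X^4 + C (t+a)*X^2 + C (t*a)) * (X^4 + C (u+b)*X^2 + C (u*b)) := by
  simp only [C_add, C_mul]
  ring

lemma main_step : ∀ (n : ℕ) (m : ℝ), 0 ≤ m → m ≤ 5 + 4^n →
    IsS4 ((algebraMap ℝ[X] (RatFunc ℝ)) (X^4 + C m * X^2 + 1)) := by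
  intro n
  induction n with
  | zero =>
    intro m hm0 hm6
    norm_num at hm6
    rw [show (1:ℝ[X]) = C 1 by rw [map_one]]
    exact IsS4.base hm0 one_pos (by nlinarith)
  | succ n ih =>
    intro m hm0 hmle
    rcases le_or_gt m 6 with hm6 | hm6
    · rw [show (1:ℝ[X]) = C 1 by rw [map_one]]
      exact IsS4.base hm0 one_pos (by nlinarith)
    · -- m > 6
      set s : ℝ := Real.sqrt (m^2 - 4) with hs
      have hs2 : s^2 = m^2 - 4 := Real.sq_sqrt (by nlinarith)
      have hsnn : 0 ≤ s := Real.sqrt_nonneg _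
      set t : ℝ := (m + s)/2 with ht
      have ht3 : 3 < t := by
        rw [ht]; nlinarith
      have ht0 : (0:ℝ) < t := by linarith
      have htm : t ≤ m := by
        have hsm : s ≤ m := by nlinarith
        rw [ht]; linarith
      set u : ℝ := 1/t with hu
      have hu0 : (0:ℝ) < u := by positivity
      have htu : t * u = 1 := by rw [hu]; field_simp
      have hmtu : m = t + u := by
        have hq : t^2 - m*t + 1 = 0 := by rw [ht]; nlinarith
        rw [hu]
        field_simp
        nlinarith
      set m'' : ℝ := t/4 + 4*u with hm''
      have hm''0 : 0 ≤ m'' := by positivity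
      have hm''le : m'' ≤ 5 + 4^n := by
        have h1 : t/4 ≤ 5/4 + 4^n := by
          have : (4:ℝ)^(n+1) = 4*4^n := by ring
          rw [this] at hmle
          linarith
        have h2 : 4*u ≤ 4/3 := by
          rw [hu, mul_one_div, div_le_div_iff₀ ht0 (by norm_num)]
          linarith
        rw [hm'']
        linarith
      -- the key identity
      have key : ((X^4 + C m * X^2 + 1) * (X^4 + C m'' * X^2 + 1) : ℝ[X])
          = (X^4 + C (t + t/4)*X^2 + C (t*(t/4))) * (X^4 + C (u + 4*u)*X^2 + C (u*(4*u))) := by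
        have h1C : (C (t*u) : ℝ[X]) = 1 := by rw [htu, map_one]
        have hfq := four_quad t u (t/4) (4*u)
        rw [show (t/4)*(4*u) = t*u by ring, h1C, ← hmtu, ← hm''] at hfq
        exact hfq
      have hG1 : IsS4 ((algebraMap ℝ[X] (RatFunc ℝ)) (X^4 + C (t + t/4)*X^2 + C (t*(t/4)))) := by
        apply IsS4.base (by positivity) (by positivity)
        nlinarith
      have hG2 : IsS4 ((algebraMap ℝ[X] (RatFunc ℝ)) (X^4 + C (u + 4*u)*X^2 + C (u*(4*u)))) := by
        apply IsS4.base (by positivity) (by positivity)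
        nlinarith
      have hf'' : IsS4 ((algebraMap ℝ[X] (RatFunc ℝ)) (X^4 + C m'' * X^2 + 1)) :=
        ih m'' hm''0 hm''le
      have hne : ((algebraMap ℝ[X] (RatFunc ℝ)) (X^4 + C m'' * X^2 + 1)) ≠ 0 := by
        apply RatFunc.algebraMap_ne_zero
        intro h0
        have := congrArg (fun q : ℝ[X] => q.coeff 4) h0
        simp [coeff_X_pow, coeff_C_mul, coeff_one] at this
      have keyR : (algebraMap ℝ[X] (RatFunc ℝ)) (X^4 + C m * X^2 + 1)
          = (algebraMap ℝ[X] (RatFunc ℝ)) (X^4 + C (t + t/4)*X^2 + C (t*(t/4)))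
            * (algebraMap ℝ[X] (RatFunc ℝ)) (X^4 + C (u + 4*u)*X^2 + C (u*(4*u)))
            * ((algebraMap ℝ[X] (RatFunc ℝ)) (X^4 + C m'' * X^2 + 1))⁻¹ := by
        rw [eq_mul_inv_iff_mul_eq₀ hne, ← map_mul, ← map_mul]
        exact congrArg _ key
      rw [keyR]
      exact (hG1.mul hG2).mul (hf''.inv hne)

lemma multiset_to_fin (M : Multiset (RatFunc ℝ)) :
    ∃ (s : ℕ) (r : Fin s → RatFunc ℝ), (M.map (fun r => r ^ 4)).sum = ∑ i, r i ^ 4 := by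
  induction M using Multiset.induction_on with
  | empty => exact ⟨0, fun i => 0, by simp⟩
  | cons a M ih =>
    obtain ⟨s, r, hr⟩ := ih
    refine ⟨s + 1, Fin.cons a r, ?_⟩
    rw [Multiset.map_cons, Multiset.sum_cons, Fin.sum_univ_succ, hr]
    simp

lemma part1 (m : ℝ) (hm : 0 ≤ m) :
    ∃ (s : ℕ) (r : Fin s → RatFunc ℝ),
      algebraMap (Polynomial ℝ) (RatFunc ℝ)
          ((Polynomial.X : Polynomial ℝ) ^ 4 + Polynomial.C m * Polynomial.X ^ 2 + 1)
        = ∑ i, r i ^ 4 := by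
  obtain ⟨n, hn⟩ : ∃ n : ℕ, m ≤ 5 + 4^n := by
    refine ⟨⌈m⌉₊, ?_⟩
    have h1 : m ≤ (⌈m⌉₊ : ℝ) := Nat.le_ceil m
    have h2 : (⌈m⌉₊ : ℝ) ≤ (4:ℝ)^(⌈m⌉₊ : ℕ) := by
      have := Nat.lt_two_pow_self (n := ⌈m⌉₊)
      have h3 : (2:ℕ)^(⌈m⌉₊:ℕ) ≤ 4^(⌈m⌉₊:ℕ) := Nat.pow_le_pow_left (by norm_num) _
      have h4 : (⌈m⌉₊:ℕ) ≤ 4^(⌈m⌉₊:ℕ) := le_trans this.le h3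
      exact_mod_cast h4
    have h5 : (0:ℝ) ≤ 4^(⌈m⌉₊:ℕ) := by positivity
    linarith
  obtain ⟨M, hM⟩ := main_step n m hm hn
  obtain ⟨s, r, hr⟩ := multiset_to_fin M
  exact ⟨s, r, by rw [hM, hr]⟩


lemma lin_pow4 (a b : ℝ) :
    ((C a * X + C b)^4 : ℝ[X]) =
      C (a^4) * X^4 + C (4*a^3*b) * X^3 + C (6*(a^2*b^2)) * X^2 + C (4*a*b^3) * X + C (b^4) := by
  simp only [map_mul, map_add, map_pow, map_ofNat]
  ring

lemma coeff4 (a b : ℝ) : ((C a * X + C b)^4 : ℝ[X]).coeff 4 = a^4 := by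
  rw [lin_pow4]
  simp only [coeff_add, coeff_C_mul, coeff_X_pow, coeff_C, coeff_X, ← C_1, ← C_pow]
  norm_num

lemma coeff2 (a b : ℝ) : ((C a * X + C b)^4 : ℝ[X]).coeff 2 = 6*(a^2*b^2) := by
  rw [lin_pow4]
  simp only [coeff_add, coeff_C_mul, coeff_X_pow, coeff_C, coeff_X, ← C_1, ← C_pow]
  norm_num

lemma coeff0 (a b : ℝ) : ((C a * X + C b)^4 : ℝ[X]).coeff 0 = b^4 := by
  rw [lin_pow4]
  simp only [coeff_add, coeff_C_mul, coeff_X_pow, coeff_C, coeff_X, ← C_1, ← C_pow]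
  norm_num

lemma part2 (m : ℝ) (hm : 6 < m) :
    ¬ ∃ (s : ℕ) (p : Fin s → Polynomial ℝ),
        (Polynomial.X : Polynomial ℝ) ^ 4 + Polynomial.C m * Polynomial.X ^ 2 + 1
          = ∑ i, p i ^ 4 := by
  rintro ⟨s, p, hp⟩
  set f : ℝ[X] := X ^ 4 + C m * X ^ 2 + 1 with hf
  -- step A : all degrees ≤ 1
  have hdeg : ∀ i, (p i).natDegree ≤ 1 := by
    by_contra hcon
    push_neg at hcon
    obtain ⟨i₀, hi₀⟩ := hcon
    set D : ℕ := Finset.univ.sup (fun i => (p i).natDegree) with hD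
    have hDle : ∀ i, (p i).natDegree ≤ D := fun i => Finset.le_sup (f := fun i => (p i).natDegree) (Finset.mem_univ i)
    have hD2 : 2 ≤ D := le_trans hi₀ (hDle i₀)
    obtain ⟨i₁, -, hi₁⟩ := Finset.exists_mem_eq_sup Finset.univ ⟨i₀, Finset.mem_univ i₀⟩
      (fun i => (p i).natDegree)
    -- coeff (4*D) of f is 0
    have hlhs : f.coeff (4*D) = 0 := by
      have h1 : 4*D ≠ 4 := by omega
      have h2 : 4*D ≠ 2 := by omega
      have h3 : 4*D ≠ 0 := by omega
      simp [hf, coeff_add, coeff_X_pow, coeff_C_mul, coeff_one, h1, h2, h3]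
    have hterm : ∀ i, (p i ^ 4).coeff (4*D) =
        if (p i).natDegree = D then (p i).leadingCoeff ^ 4 else 0 := by
      intro i
      rcases lt_or_eq_of_le (hDle i) with h | h
      · rw [if_neg (Nat.ne_of_lt h)]
        apply coeff_eq_zero_of_natDegree_lt
        calc (p i ^ 4).natDegree ≤ 4 * (p i).natDegree := natDegree_pow_le
          _ < 4 * D := by omega
      · rw [if_pos h, ← h, ← coeff_pow_mul_natDegree]
    have hrhs : (∑ i, p i ^ 4).coeff (4*D) = 0 := by rw [← hp]; exact hlhs
    rw [finset_sum_coeff] at hrhs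
    have hnn : ∀ i ∈ Finset.univ, 0 ≤ (p i ^ 4).coeff (4*D) := by
      intro i _
      rw [hterm i]
      split
      · positivity
      · exact le_refl 0
    have := (Finset.sum_eq_zero_iff_of_nonneg hnn).mp hrhs i₁ (Finset.mem_univ i₁)
    rw [hterm i₁, if_pos hi₁.symm] at this
    have hne : p i₁ ≠ 0 := by
      intro h0
      rw [h0] at hi₁
      simp at hi₁
      have h5 := hi₁ i₀
      omega
    exact pow_ne_zero 4 (leadingCoeff_ne_zero.mpr hne) this
  -- step B : write p i = a i * X + b i
  set a : Fin s → ℝ := fun i => (p i).coeff 1 with ha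
  set b : Fin s → ℝ := fun i => (p i).coeff 0 with hb
  have hpi : ∀ i, p i = C (a i) * X + C (b i) := by
    intro i
    exact eq_X_add_C_of_degree_le_one (natDegree_le_iff_degree_le.mp (hdeg i))
  -- step C : coefficient identities
  have h4 : (1:ℝ) = ∑ i, (a i)^4 := by
    have := congrArg (fun q : ℝ[X] => q.coeff 4) hp
    simp only [hf, coeff_add, coeff_X_pow, coeff_C_mul, coeff_one, finset_sum_coeff] at this
    norm_num at this
    rw [this]
    exact Finset.sum_congr rfl fun i _ => by rw [hpi i, coeff4]
  have h0 : (1:ℝ) = ∑ i, (b i)^4 := by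
    have := congrArg (fun q : ℝ[X] => q.coeff 0) hp
    simp only [hf, coeff_add, coeff_X_pow, coeff_C_mul, coeff_one, finset_sum_coeff] at this
    norm_num at this
    rw [this]
    exact Finset.sum_congr rfl fun i _ => by rw [hpi i, coeff0]
  have h2 : m = ∑ i, 6*((a i)^2*(b i)^2) := by
    have := congrArg (fun q : ℝ[X] => q.coeff 2) hp
    simp only [hf, coeff_add, coeff_X_pow, coeff_C_mul, coeff_one, finset_sum_coeff] at this
    norm_num at this
    rw [this]
    exact Finset.sum_congr rfl fun i _ => by rw [hpi i, coeff2]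
  -- step D : Cauchy-Schwarz
  have hcs := Finset.sum_mul_sq_le_sq_mul_sq Finset.univ (fun i => (a i)^2) (fun i => (b i)^2)
  have e1 : ∑ i : Fin s, ((a i)^2)^2 = ∑ i, (a i)^4 := by
    exact Finset.sum_congr rfl fun i _ => by ring
  have e2 : ∑ i : Fin s, ((b i)^2)^2 = ∑ i, (b i)^4 := by
    exact Finset.sum_congr rfl fun i _ => by ring
  rw [e1, e2, ← h4, ← h0] at hcs
  have hS : (0:ℝ) ≤ ∑ i : Fin s, (a i)^2 * (b i)^2 :=
    Finset.sum_nonneg fun i _ => by positivity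
  have h2' : m = 6 * ∑ i : Fin s, (a i)^2 * (b i)^2 := by
    rw [h2, Finset.mul_sum]
  nlinarith [hcs, hS, h2', hm]


/-- For every real `m ≥ 0`, the polynomial `x⁴ + m·x² + 1` is a sum of
fourth powers of rational functions in `ℝ(x)`. In particular, for `m > 6` it is a sum
of fourth powers in `ℝ(x)` but not in `ℝ[x]`, so the Theorem of Cassels fails for
fourth powers. -/
theorem cassels_fails_for_fourth_powers :
    (∀ m : ℝ, 0 ≤ m →
      ∃ (s : ℕ) (r : Fin s → RatFunc ℝ),
        algebraMap (Polynomial ℝ) (RatFunc ℝ)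
            ((Polynomial.X : Polynomial ℝ) ^ 4 + Polynomial.C m * Polynomial.X ^ 2 + 1)
          = ∑ i, r i ^ 4) ∧
    (∀ m : ℝ, 6 < m →
      ¬ ∃ (s : ℕ) (p : Fin s → Polynomial ℝ),
        (Polynomial.X : Polynomial ℝ) ^ 4 + Polynomial.C m * Polynomial.X ^ 2 + 1
          = ∑ i, p i ^ 4) := by
  exact ⟨part1, part2⟩
end
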